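/- arXiv:math/0511608 — 4 statements merged into one kernel-verified Lean document; each statement's English description precedes it below -/
import Mathlib

section
/- Any set of n-1 linearly independent roots of SL(n,C) (i.e., vectors of the form e_i - e_j in Z^n/Δ, where Δ is the diagonal) forms a Z-basis of the root lattice Q(R). -/
open Finset Pointwise

/-- Coercion of an integer vector to a real vector. -/
def coeZ {n : ℕ} (v : Fin n → ℤ) : Fin n → ℝ := fun i => (v i : ℝ)

/-- The root `e_i - e_j` of `SL(n, ℂ)`, as an integer vector. -/
def rootZ (n : ℕ) (i j : Fin n) : Fin n → ℤ :=
  fun t => (if t = i then 1 else 0) - (if t = j then 1 else 0)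

/-- The root `e_i - e_j` as a real vector. -/
def rootR (n : ℕ) (i j : Fin n) : Fin n → ℝ :=
  fun t => (if t = i then 1 else 0) - (if t = j then 1 else 0)

/-- A vector is a root of `SL(n, ℂ)`. -/
def IsRootVec {n : ℕ} (v : Fin n → ℤ) : Prop :=
  ∃ i j : Fin n, i ≠ j ∧ v = rootZ n i j

/-- `E` is an edge (a one-dimensional face) of the set `P`. -/
def IsEdge {n : ℕ} (P E : Set (Fin n → ℝ)) : Prop :=
  IsExtreme ℝ P E ∧ Module.finrank ℝ (affineSpan ℝ E).direction = 1

/-- The edge `E` is parallel to the root `e_i - e_j` for some `i ≠ j`. -/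
def EdgeParallelRoot {n : ℕ} (E : Set (Fin n → ℝ)) : Prop :=
  ∃ i j : Fin n, i ≠ j ∧ ∀ x ∈ E, ∀ y ∈ E, ∃ c : ℝ, x - y = c • rootR n i j

/-- A finite subset of the root lattice of `SL(n, ℂ)` is root-saturated if every
edge of its convex hull is parallel to a root, and it equals the intersection of
its convex hull with the root lattice. -/
def RootSaturated {n : ℕ} (A : Finset (Fin n → ℤ)) : Prop :=
  (∀ v ∈ A, ∑ i, v i = 0) ∧
  (∀ E : Set (Fin n → ℝ),
      IsEdge (convexHull ℝ (coeZ '' (A : Set (Fin n → ℤ)))) E → EdgeParallelRoot E) ∧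
  (∀ v : Fin n → ℤ, ∑ i, v i = 0 →
      coeZ v ∈ convexHull ℝ (coeZ '' (A : Set (Fin n → ℤ))) → v ∈ A)

/-- The indicator vector (in `ℤ^n`) of a subset `S ⊆ {1, …, n}`. -/
def indZ {n : ℕ} (S : Finset (Fin n)) : Fin n → ℤ := fun i => if i ∈ S then 1 else 0

/-- The indicator vector (in `ℝ^n`) of a subset `S ⊆ {1, …, n}`. -/
def indR {n : ℕ} (S : Finset (Fin n)) : Fin n → ℝ := fun i => if i ∈ S then 1 else 0

/-- `B` is the collection of bases of a matroid on `{1, …, n}`: it is nonempty and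
satisfies the basis exchange axiom. -/
def IsMatroidBases {n : ℕ} (B : Finset (Finset (Fin n))) : Prop :=
  B.Nonempty ∧
  ∀ B₁ ∈ B, ∀ B₂ ∈ B, ∀ x ∈ B₁ \ B₂, ∃ y ∈ B₂ \ B₁, insert y (B₁.erase x) ∈ B

lemma rootZ_self (n : ℕ) (i : Fin n) : rootZ n i i = 0 := by
  funext t; simp [rootZ]

lemma rootZ_add (n : ℕ) (a b c : Fin n) : rootZ n a b + rootZ n b c = rootZ n a c := by
  funext t; simp [rootZ]

lemma rootZ_neg (n : ℕ) (a b : Fin n) : -rootZ n a b = rootZ n b a := by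
  funext t; simp [rootZ]

lemma rootZ_sum (n : ℕ) (i j : Fin n) : ∑ t, rootZ n i j t = 0 := by
  simp [rootZ, Finset.sum_sub_distrib]

lemma rootZ_sum_finset (n : ℕ) (i j : Fin n) (S : Finset (Fin n)) (h : i ∈ S ↔ j ∈ S) :
    ∑ t ∈ S, rootZ n i j t = 0 := by
  simp only [rootZ, Finset.sum_sub_distrib, Finset.sum_ite_eq' S]
  by_cases hi : i ∈ S
  · simp [hi, h.mp hi]
  · simp [hi, mt h.mpr hi]


/-- any `n-1` linearly independent roots of `SL(n, ℂ)` form a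
`ℤ`-basis of the root lattice `Q(R) = {v ∈ ℤ^n : ∑ vᵢ = 0}`. -/
theorem independent_roots_form_basis_of_root_lattice (n : ℕ)
    (α : Fin (n - 1) → (Fin n → ℤ))
    (hroot : ∀ k, IsRootVec (α k))
    (hindep : LinearIndependent ℚ (fun k => (fun i => (α k i : ℚ)))) :
    LinearIndependent ℤ α ∧
      (Submodule.span ℤ (Set.range α) : Set (Fin n → ℤ)) =
        {v : Fin n → ℤ | ∑ i, v i = 0} := by
  classical
  set M := Submodule.span ℤ (Set.range α) with hM
  constructor
  · -- ℤ-independence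
    have h1 : LinearIndependent ℤ (fun k => (fun i => (α k i : ℚ))) :=
      hindep.restrict_scalars (by intro a b h; simpa using h)
    let f : (Fin n → ℤ) →ₗ[ℤ] (Fin n → ℚ) :=
      { toFun := fun v i => (v i : ℚ)
        map_add' := by intros; funext i; simp
        map_smul' := by intros; funext i; simp }
    exact LinearIndependent.of_comp f h1
  · ext v
    simp only [SetLike.mem_coe, Set.mem_setOf_eq]
    constructor
    · -- span ⊆ sum-zero
      intro hv
      have hle : M ≤ LinearMap.ker ((Finset.univ.sum (fun i => LinearMap.proj i)) :
          (Fin n → ℤ) →ₗ[ℤ] ℤ) := by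
        rw [hM, Submodule.span_le]
        rintro _ ⟨k, rfl⟩
        obtain ⟨i, j, hij, heq⟩ := hroot k
        simp [LinearMap.mem_ker, heq, LinearMap.sum_apply, rootZ_sum]
      have := hle hv
      simpa [LinearMap.mem_ker, LinearMap.sum_apply] using this
    · intro hv
      rcases Nat.eq_zero_or_pos n with h0 | hn
      · subst h0
        have hv0 : v = 0 := funext fun i => absurd i.isLt (by omega)
        exact hv0 ▸ Submodule.zero_mem M
      · set i₀ : Fin n := ⟨0, hn⟩
        have key : ∀ j, rootZ n i₀ j ∈ M := by
          by_contra hc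
          push_neg at hc
          obtain ⟨j, hj⟩ := hc
          set S : Finset (Fin n) := Finset.univ.filter (fun j => rootZ n i₀ j ∈ M) with hS
          have hi₀S : i₀ ∈ S := by simp [hS, rootZ_self]
          have hjS : j ∉ S := by simp [hS, hj]
          have hnej : i₀ ≠ j := fun h => hjS (h ▸ hi₀S)
          have hn2 : 2 ≤ n := by
            by_contra h
            have : Subsingleton (Fin n) := by
              apply Fin.subsingleton_iff_le_one.mpr; omega
            exact hnej (Subsingleton.elim _ _)
          let φ : (Fin n → ℚ) →ₗ[ℚ] ℚ × ℚ :=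
            { toFun := fun w => (∑ i ∈ S, w i, ∑ i, w i)
              map_add' := by intros; simp [Finset.sum_add_distrib, Prod.ext_iff]
              map_smul' := by intros; simp [Finset.mul_sum, Prod.ext_iff] }
          have hker : ∀ k, (fun i => (α k i : ℚ)) ∈ LinearMap.ker φ := by
            intro k
            obtain ⟨a, b, hab, heq⟩ := hroot k
            have hmem : rootZ n a b ∈ M := heq ▸ Submodule.subset_span ⟨k, rfl⟩
            have hiff : a ∈ S ↔ b ∈ S := by
              simp only [hS, Finset.mem_filter, Finset.mem_univ, true_and]
              constructor
              · intro h; rw [← rootZ_add n i₀ a b]; exact Submodule.add_mem _ h hmem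
              · intro h
                rw [← rootZ_add n i₀ b a]
                exact Submodule.add_mem _ h (rootZ_neg n a b ▸ Submodule.neg_mem _ hmem)
            have h1 : ∑ i ∈ S, (α k i : ℚ) = 0 := by
              rw [heq]; exact_mod_cast rootZ_sum_finset n a b S hiff
            have h2 : ∑ i, (α k i : ℚ) = 0 := by
              rw [heq]; exact_mod_cast rootZ_sum n a b
            simp [LinearMap.mem_ker, φ, Prod.ext_iff, h1, h2]
          have hφsurj : Function.Surjective φ := by
            intro p
            refine ⟨p.1 • (fun t => if t = i₀ then (1:ℚ) else 0)
              + (p.2 - p.1) • (fun t => if t = j then (1:ℚ) else 0), ?_⟩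
            have e1 : ∑ i ∈ S, (if i = i₀ then (1:ℚ) else 0) = 1 := by
              rw [Finset.sum_ite_eq' S i₀]; simp [hi₀S]
            have e2 : ∑ i ∈ S, (if i = j then (1:ℚ) else 0) = 0 := by
              rw [Finset.sum_ite_eq' S j]; simp [hjS]
            have e3 : ∑ i : Fin n, (if i = i₀ then (1:ℚ) else 0) = 1 := by simp
            have e4 : ∑ i : Fin n, (if i = j then (1:ℚ) else 0) = 1 := by simp
            simp only [φ, LinearMap.coe_mk, AddHom.coe_mk, Pi.add_apply, Pi.smul_apply,
              smul_eq_mul, Finset.sum_add_distrib, ← Finset.mul_sum, e1, e2, e3, e4,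
              Prod.ext_iff]
            constructor <;> ring
          have hli : LinearIndependent ℚ
              (fun k => (⟨fun i => (α k i : ℚ), hker k⟩ : LinearMap.ker φ)) :=
            LinearIndependent.of_comp (LinearMap.ker φ).subtype (by convert hindep; rfl)
          have hcard : n - 1 ≤ Module.finrank ℚ (LinearMap.ker φ) := by
            simpa using hli.fintype_card_le_finrank
          have hrange : LinearMap.range φ = ⊤ := LinearMap.range_eq_top.mpr hφsurj
          have hrk := LinearMap.finrank_range_add_finrank_ker φ
          rw [hrange, finrank_top] at hrk
          have hp2 : Module.finrank ℚ (ℚ × ℚ) = 2 := by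
            simp [Module.finrank_prod]
          have hpn : Module.finrank ℚ (Fin n → ℚ) = n := by
            simp [Module.finrank_pi]
          rw [hp2, hpn] at hrk
          omega
        have key2 : ∀ a b : Fin n, rootZ n a b ∈ M := by
          intro a b
          rw [← rootZ_add n a i₀ b]
          exact Submodule.add_mem _ (rootZ_neg n i₀ a ▸ Submodule.neg_mem _ (key a)) (key b)
        have hvsum : v = ∑ j, v j • rootZ n j i₀ := by
          funext t
          simp only [Finset.sum_apply, Pi.smul_apply, rootZ, smul_eq_mul, mul_sub,
            Finset.sum_sub_distrib]
          rw [← Finset.sum_mul, hv, zero_mul, sub_zero]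
          simp [mul_ite, mul_one, mul_zero, Finset.sum_ite_eq]
        rw [hvsum]
        exact Submodule.sum_mem _ fun j _ => Submodule.smul_mem _ _ (key2 j i₀)
end

section
/- For a matroid M on ground set {1,...,n} with basis set B, two vertices v^{B_1}, v^{B_2} of the matroid polytope P_M (the convex hull in R^n of the indicator vectors of bases) form an edge of P_M if and only if v^{B_1} - v^{B_2} = e_i - e_j for some i ≠ j. -/
open Finset Pointwise

namespace MPaux

/-! ### indicator lemmas -/

variable {n : ℕ}

lemma indR_inj {S T : Finset (Fin n)} (h : indR S = indR T) : S = T := by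
  ext t
  have := congrFun h t
  simp only [indR] at this
  by_cases hS : t ∈ S <;> by_cases hT : t ∈ T <;> simp [hS, hT] at this ⊢

lemma indR_mem_segment {S B₁ B₂ : Finset (Fin n)}
    (h : indR S ∈ segment ℝ (indR B₁) (indR B₂)) : S = B₁ ∨ S = B₂ := by
  obtain ⟨a, b, ha, hb, hab, hsum⟩ := h
  by_cases hBB : B₁ = B₂
  · subst hBB
    left
    apply indR_inj
    rw [← hsum, ← add_smul, hab, one_smul]
  · obtain ⟨t, ht⟩ : ∃ t, ¬ ((t ∈ B₁) ↔ (t ∈ B₂)) := by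
      by_contra hcon
      push_neg at hcon
      exact hBB (Finset.ext fun t => (hcon t))
    have hval := congrFun hsum t
    simp only [Pi.add_apply, Pi.smul_apply, smul_eq_mul, indR] at hval
    have h01 : (if t ∈ S then (1:ℝ) else 0) = 0 ∨ (if t ∈ S then (1:ℝ) else 0) = 1 := by
      by_cases hts : t ∈ S <;> simp [hts]
    have hcase : (a = 0 ∧ b = 1) ∨ (a = 1 ∧ b = 0) := by
      rcases h01 with h01 | h01 <;> rw [h01] at hval <;>
        by_cases h1 : t ∈ B₁ <;> by_cases h2 : t ∈ B₂ <;>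
        simp only [h1, h2, if_true, if_false, mul_one, mul_zero, add_zero, zero_add] at hval <;>
        first
          | exact absurd (iff_of_true h1 h2) ht
          | exact absurd (iff_of_false h1 h2) ht
          | (left; constructor <;> linarith)
          | (right; constructor <;> linarith)
    rcases hcase with ⟨rfl, rfl⟩ | ⟨rfl, rfl⟩
    · right; apply indR_inj; rw [← hsum]; funext u; simp
    · left; apply indR_inj; rw [← hsum]; funext u; simp

/-! ### linear functional -/

def fsum (c x : Fin n → ℝ) : ℝ := ∑ i, c i * x i

lemma fsum_comb (c x y : Fin n → ℝ) (a b : ℝ) :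
    fsum c (a • x + b • y) = a * fsum c x + b * fsum c y := by
  simp only [fsum, Pi.add_apply, Pi.smul_apply, smul_eq_mul, Finset.mul_sum]
  rw [← Finset.sum_add_distrib]
  exact Finset.sum_congr rfl fun i _ => by ring

lemma fsum_sum {ι : Type*} (c : Fin n → ℝ) (t : Finset ι) (g : ι → Fin n → ℝ) :
    fsum c (∑ j ∈ t, g j) = ∑ j ∈ t, fsum c (g j) := by
  simp only [fsum, Finset.sum_apply, Finset.mul_sum]
  exact Finset.sum_comm

lemma fsum_smul (c : Fin n → ℝ) (a : ℝ) (x : Fin n → ℝ) : fsum c (a • x) = a * fsum c x := by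
  simp only [fsum, Pi.smul_apply, smul_eq_mul, Finset.mul_sum]
  exact Finset.sum_congr rfl fun i _ => by ring

lemma fsum_hull_le (V : Set (Fin n → ℝ)) (c : Fin n → ℝ) (M : ℝ)
    (hbd : ∀ v ∈ V, fsum c v ≤ M) {p : Fin n → ℝ} (hp : p ∈ convexHull ℝ V) :
    fsum c p ≤ M := by
  have hconv : Convex ℝ {x : Fin n → ℝ | fsum c x ≤ M} := by
    intro x hx y hy a b ha hb hab
    simp only [Set.mem_setOf_eq] at hx hy ⊢
    rw [fsum_comb]
    calc a * fsum c x + b * fsum c y ≤ a * M + b * M := by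
          apply add_le_add (mul_le_mul_of_nonneg_left hx ha) (mul_le_mul_of_nonneg_left hy hb)
      _ = M := by rw [← add_mul, hab, one_mul]
  exact convexHull_min hbd hconv hp

lemma fsum_hull_face (V : Set (Fin n → ℝ)) (c : Fin n → ℝ) (M : ℝ)
    (hbd : ∀ v ∈ V, fsum c v ≤ M) {p : Fin n → ℝ} (hp : p ∈ convexHull ℝ V)
    (hpe : fsum c p = M) : p ∈ convexHull ℝ {v | v ∈ V ∧ fsum c v = M} := by
  classical
  rw [_root_.convexHull_eq] at hp
  obtain ⟨ι, t, w, z, hw0, hw1, hz, hcm⟩ := hp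
  rw [Finset.centerMass_eq_of_sum_1 _ _ hw1] at hcm
  have hfp : ∑ i ∈ t, w i * fsum c (z i) = M := by
    rw [← hpe, ← hcm, fsum_sum]
    exact Finset.sum_congr rfl fun i _ => (fsum_smul c (w i) (z i)).symm
  have hzero : ∀ i ∈ t, w i * (M - fsum c (z i)) = 0 := by
    rw [← Finset.sum_eq_zero_iff_of_nonneg]
    · have : ∑ i ∈ t, w i * (M - fsum c (z i)) = (∑ i ∈ t, w i) * M - ∑ i ∈ t, w i * fsum c (z i) := by
        rw [Finset.sum_mul, ← Finset.sum_sub_distrib]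
        exact Finset.sum_congr rfl fun i _ => by ring
      rw [this, hw1, one_mul, hfp, sub_self]
    · intro i hi
      exact mul_nonneg (hw0 i hi) (sub_nonneg.2 (hbd _ (hz i hi)))
  have hkey : ∀ i ∈ t, w i ≠ 0 → fsum c (z i) = M := by
    intro i hi hwi
    have := hzero i hi
    rcases mul_eq_zero.1 this with h | h
    · exact absurd h hwi
    · linarith [sub_eq_zero.1 h]
  rw [← hcm, ← Finset.centerMass_eq_of_sum_1 _ _ hw1, ← Finset.centerMass_filter_ne_zero]
  apply Finset.centerMass_mem_convexHull
  · intro i hi; exact hw0 i (Finset.mem_filter.1 hi).1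
  · rw [Finset.sum_filter_ne_zero, hw1]; norm_num
  · intro i hi
    obtain ⟨hit, hwi⟩ := Finset.mem_filter.1 hi
    exact ⟨hz i hit, hkey i hit hwi⟩

lemma fsum_indR (c : Fin n → ℝ) (S : Finset (Fin n)) : fsum c (indR S) = ∑ t ∈ S, c t := by
  simp only [fsum, indR, mul_ite, mul_one, mul_zero]
  rw [Finset.sum_ite_mem, Finset.univ_inter]


namespace MyAux
variable {α : Type*} {M : Matroid α} {I B S : Set α}

lemma base_of_indep_encard (hI : M.Indep I) (hB : M.IsBase B) (hcard : I.encard = B.encard)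
    (hfinB : B.Finite) : M.IsBase I := by
  obtain ⟨B', hB', hIB'⟩ := hI.exists_isBase_superset
  have h2 : B'.encard = B.encard := hB'.encard_eq_encard_of_isBase hB
  have hIfin : I.Finite := (Set.finite_iff_finite_of_encard_eq_encard hcard).2 hfinB
  have : I = B' := hIfin.eq_of_subset_of_encard_le hIB' (by rw [h2, hcard])
  rwa [this]

lemma base_of_spanning_encard (hS : M.E ⊆ M.closure S) (hSE : S ⊆ M.E) (hB : M.IsBase B)
    (hcard : S.encard = B.encard) (hfin : S.Finite) : M.IsBase S := by
  have hSpan : M.Spanning S := by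
    rw [Matroid.spanning_iff_ground_subset_closure hSE]; exact hS
  obtain ⟨B', hB', hB'S⟩ := hSpan.exists_isBase_subset
  have h2 : B'.encard = B.encard := hB'.encard_eq_encard_of_isBase hB
  have : B' = S := hfin.eq_of_subset_of_encard_le' hB'S (by rw [h2, hcard])
  rwa [← this]

lemma exists_symmetric_exchange (M : Matroid α) [M.Finite] {B₁ B₂ : Set α} (hB₁ : M.IsBase B₁)
    (hB₂ : M.IsBase B₂) {e : α} (he : e ∈ B₁ \ B₂) :
    ∃ f ∈ B₂ \ B₁, M.IsBase (insert f (B₁ \ {e})) ∧ M.IsBase (insert e (B₂ \ {f})) := by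
  classical
  have hB₂fin : B₂.Finite := M.ground_finite.subset hB₂.subset_ground
  have heE : e ∈ M.E := hB₁.subset_ground he.1
  have heB₂ : e ∉ B₂ := he.2
  -- minimal S ⊆ B₂ with e ∈ closure S
  set T : Finset (Finset α) := hB₂fin.toFinset.powerset.filter (fun S => e ∈ M.closure ↑S) with hT
  have hTne : hB₂fin.toFinset ∈ T := by
    simp only [hT, Finset.mem_filter, Finset.mem_powerset, le_refl, true_and, Set.Finite.coe_toFinset]
    rw [hB₂.closure_eq]
    exact heE
  obtain ⟨S, hST, hmin⟩ := T.exists_min_image Finset.card ⟨_, hTne⟩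
  rw [hT, Finset.mem_filter, Finset.mem_powerset] at hST
  obtain ⟨hSsub', hecl⟩ := hST
  have hSsub : (↑S : Set α) ⊆ B₂ := by
    intro x hx
    have := hSsub' hx
    rwa [Set.Finite.mem_toFinset] at this
  have hminP : ∀ f ∈ S, e ∉ M.closure ((↑S : Set α) \ {f}) := by
    intro f hf hecl'
    have h1 : S.erase f ∈ T := by
      rw [hT, Finset.mem_filter, Finset.mem_powerset]
      refine ⟨(Finset.erase_subset f S).trans hSsub', ?_⟩
      rwa [Finset.coe_erase]
    have := hmin _ h1
    have h2 := Finset.card_erase_lt_of_mem hf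
    omega
  -- step 3
  have key : ∀ f ∈ S, M.IsBase (insert e (B₂ \ {f})) := by
    intro f hf
    have hfB₂ : f ∈ B₂ := hSsub hf
    have hx : e ∈ M.closure (insert f ((↑S : Set α) \ {f})) \ M.closure ((↑S : Set α) \ {f}) := by
      constructor
      · rwa [Set.insert_diff_singleton, Set.insert_eq_of_mem (by exact_mod_cast hf)]
      · exact hminP f hf
    have hfcl : f ∈ M.closure (insert e ((↑S : Set α) \ {f})) := (Matroid.closure_exchange hx).1
    have hsub2 : insert e ((↑S : Set α) \ {f}) ⊆ insert e (B₂ \ {f}) :=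
      Set.insert_subset_insert (Set.diff_subset_diff_left hSsub)
    have hfcl2 : f ∈ M.closure (insert e (B₂ \ {f})) := M.closure_subset_closure hsub2 hfcl
    have hsubE : insert e (B₂ \ {f}) ⊆ M.E :=
      Set.insert_subset heE (Set.diff_subset.trans hB₂.subset_ground)
    have hspan : M.E ⊆ M.closure (insert e (B₂ \ {f})) := by
      have hB₂cl : B₂ ⊆ M.closure (insert e (B₂ \ {f})) := by
        intro g hg
        by_cases hgf : g = f
        · rwa [hgf]
        · exact M.subset_closure _ hsubE (Set.mem_insert_of_mem _ ⟨hg, hgf⟩)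
      calc M.E = M.closure B₂ := hB₂.closure_eq.symm
        _ ⊆ M.closure (insert e (B₂ \ {f})) :=
            M.closure_subset_closure_of_subset_closure hB₂cl
    refine base_of_spanning_encard hspan hsubE hB₂ ?_ (hB₂fin.diff.insert e)
    rw [Set.encard_insert_of_notMem (fun h => heB₂ h.1), Set.encard_diff_singleton_add_one hfB₂]
  -- step 4
  have hnot : ¬ ((↑S : Set α) ⊆ M.closure (B₁ \ {e})) := by
    intro hsub
    have : e ∈ M.closure (B₁ \ {e}) :=
      M.closure_subset_closure_of_subset_closure hsub hecl
    exact hB₁.indep.notMem_closure_diff_of_mem he.1 this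
  obtain ⟨f, hfS, hfncl⟩ := Set.not_subset.mp hnot
  have hfS' : f ∈ S := by exact_mod_cast hfS
  have hfB₂ : f ∈ B₂ := hSsub hfS
  have hfe : f ≠ e := fun h => heB₂ (h ▸ hfB₂)
  have hfB₁ : f ∉ B₁ := by
    intro hfB₁
    exact hfncl (M.subset_closure _ (Set.diff_subset.trans hB₁.subset_ground) ⟨hfB₁, hfe⟩)
  have hIindep : M.Indep (B₁ \ {e}) := hB₁.indep.subset Set.diff_subset
  have hfnotmem : f ∉ B₁ \ {e} := fun h => hfB₁ h.1
  have hins : M.Indep (insert f (B₁ \ {e})) := by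
    rw [hIindep.insert_indep_iff_of_notMem hfnotmem]
    exact ⟨hB₂.subset_ground hfB₂, hfncl⟩
  have hbase1 : M.IsBase (insert f (B₁ \ {e})) := by
    refine base_of_indep_encard hins hB₁ ?_ (M.ground_finite.subset hB₁.subset_ground)
    rw [Set.encard_insert_of_notMem hfnotmem, Set.encard_diff_singleton_add_one he.1]
  exact ⟨f, ⟨hfB₂, hfB₁⟩, hbase1, key f hfS'⟩

end MyAux

section Bridge
open Set in
/-- the base predicate on sets coming from a finset family -/
def toBaseP {n : ℕ} (B : Finset (Finset (Fin n))) : Set (Fin n) → Prop :=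
  fun s => ∃ b ∈ B, s = ↑b

open Set in
lemma exchP {n : ℕ} {B : Finset (Finset (Fin n))} (hB : IsMatroidBases B) :
    Matroid.ExchangeProperty (toBaseP B) := by
  rintro X Y ⟨b₁, hb₁, rfl⟩ ⟨b₂, hb₂, rfl⟩ a ha
  have ha' : a ∈ b₁ \ b₂ := by
    rw [Finset.mem_sdiff]
    exact ⟨by exact_mod_cast ha.1, fun h => ha.2 (by exact_mod_cast h)⟩
  obtain ⟨y, hy, hins⟩ := hB.2 b₁ hb₁ b₂ hb₂ a ha'
  rw [Finset.mem_sdiff] at hy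
  refine ⟨y, ⟨by exact_mod_cast hy.1, fun h => hy.2 (by exact_mod_cast h)⟩, ⟨_, hins, ?_⟩⟩
  rw [Finset.coe_insert, Finset.coe_erase]

open Set in
lemma bases_card_eq {n : ℕ} {B : Finset (Finset (Fin n))} (hB : IsMatroidBases B)
    {B₁ B₂ : Finset (Fin n)} (h₁ : B₁ ∈ B) (h₂ : B₂ ∈ B) : B₁.card = B₂.card := by
  have h := (exchP hB).encard_isBase_eq (B₁ := (↑B₁ : Set (Fin n))) (B₂ := (↑B₂ : Set (Fin n)))
    ⟨B₁, h₁, rfl⟩ ⟨B₂, h₂, rfl⟩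
  rw [Set.encard_coe_eq_coe_finsetCard, Set.encard_coe_eq_coe_finsetCard] at h
  exact_mod_cast h

open Set in
lemma bases_symm_exchange {n : ℕ} {B : Finset (Finset (Fin n))} (hB : IsMatroidBases B)
    {B₁ B₂ : Finset (Fin n)} (h₁ : B₁ ∈ B) (h₂ : B₂ ∈ B) {x : Fin n} (hx : x ∈ B₁ \ B₂) :
    ∃ y ∈ B₂ \ B₁, insert y (B₁.erase x) ∈ B ∧ insert x (B₂.erase y) ∈ B := by
  classical
  obtain ⟨b₀, hb₀⟩ := hB.1
  let M : Matroid (Fin n) := Matroid.ofIsBaseOfFinite (Set.finite_univ) (toBaseP B)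
    ⟨↑b₀, b₀, hb₀, rfl⟩ (exchP hB) (fun _ _ => Set.subset_univ _)
  haveI : M.Finite := ⟨Set.finite_univ⟩
  have hBase : ∀ s, M.IsBase s ↔ toBaseP B s := fun s => Iff.rfl
  rw [Finset.mem_sdiff] at hx
  obtain ⟨f, hf, hA₁, hA₂⟩ := MyAux.exists_symmetric_exchange M
    (B₁ := (↑B₁ : Set (Fin n))) (B₂ := (↑B₂ : Set (Fin n)))
    ((hBase _).2 ⟨B₁, h₁, rfl⟩) ((hBase _).2 ⟨B₂, h₂, rfl⟩)
    (e := x) ⟨by exact_mod_cast hx.1, fun h => hx.2 (by exact_mod_cast h)⟩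
  obtain ⟨b, hb, hbeq⟩ := (hBase _).1 hA₁
  obtain ⟨b', hb', hbeq'⟩ := (hBase _).1 hA₂
  have he1 : insert f (B₁.erase x) = b := by
    apply Finset.coe_injective
    rw [← hbeq, Finset.coe_insert, Finset.coe_erase]
  have he2 : insert x (B₂.erase f) = b' := by
    apply Finset.coe_injective
    rw [← hbeq', Finset.coe_insert, Finset.coe_erase]
  refine ⟨f, ?_, he1 ▸ hb, he2 ▸ hb'⟩
  rw [Finset.mem_sdiff]
  exact ⟨by exact_mod_cast hf.1, fun h => hf.2 (by exact_mod_cast h)⟩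

end Bridge


section Main
variable {n : ℕ} {B : Finset (Finset (Fin n))}

lemma backward (hB : IsMatroidBases B) {B₁ B₂ : Finset (Fin n)} (h₁ : B₁ ∈ B) (h₂ : B₂ ∈ B)
    {i j : Fin n} (hij : i ≠ j) (hroot : indR B₁ - indR B₂ = rootR n i j) :
    IsEdge (convexHull ℝ (indR '' (B : Set (Finset (Fin n)))))
      (segment ℝ (indR B₁) (indR B₂)) := by
  classical
  have hval : ∀ t, (if t ∈ B₁ then (1:ℝ) else 0) - (if t ∈ B₂ then 1 else 0) =
      (if t = i then (1:ℝ) else 0) - (if t = j then 1 else 0) := by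
    intro t
    have := congrFun hroot t
    simpa [indR, rootR] using this
  have hi₁ : i ∈ B₁ ∧ i ∉ B₂ := by
    have h := hval i
    rw [if_pos rfl, if_neg hij] at h
    by_cases h1 : i ∈ B₁ <;> by_cases h2 : i ∈ B₂ <;>
      simp only [h1, h2, if_true, if_false] at h <;>
      first | exact ⟨h1, h2⟩ | norm_num at h
  have hj₂ : j ∉ B₁ ∧ j ∈ B₂ := by
    have h := hval j
    rw [if_neg (Ne.symm hij), if_pos rfl] at h
    by_cases h1 : j ∈ B₁ <;> by_cases h2 : j ∈ B₂ <;>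
      simp only [h1, h2, if_true, if_false] at h <;>
      first | exact ⟨h1, h2⟩ | norm_num at h
  have hmem3 : ∀ t, t ≠ i → t ≠ j → (t ∈ B₁ ↔ t ∈ B₂) := by
    intro t hti htj
    have h := hval t
    rw [if_neg hti, if_neg htj] at h
    constructor
    · intro h1
      by_contra h2
      rw [if_pos h1, if_neg h2] at h
      norm_num at h
    · intro h2
      by_contra h1
      rw [if_neg h1, if_pos h2] at h
      norm_num at h
  set C : Finset (Fin n) := B₁.erase i with hC
  have hiC : i ∉ C := Finset.notMem_erase _ _
  have hCB₁ : C ⊆ B₁ := Finset.erase_subset _ _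
  have hB₁eq : B₁ = insert i C := (Finset.insert_erase hi₁.1).symm
  have hjC : j ∉ C := fun h => hj₂.1 (hCB₁ h)
  have hB₂eq : B₂ = insert j C := by
    ext t
    simp only [Finset.mem_insert]
    rcases eq_or_ne t j with rfl | htj
    · simp [hj₂.2]
    rcases eq_or_ne t i with rfl | hti
    · simp [hi₁.2, hij, hiC]
    · rw [← hmem3 t hti htj]
      simp [hC, Finset.mem_erase, hti, htj]
  set k := C.card with hk
  set c : Fin n → ℝ := fun t =>
    (if t ∈ C then 2 else 0) + (if t ∈ ({i, j} : Finset (Fin n)) then 1 else 0) with hc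
  set V : Set (Fin n → ℝ) := indR '' (B : Set (Finset (Fin n))) with hV
  set MM : ℝ := 2 * (k : ℝ) + 1 with hMM
  have hfv : ∀ S : Finset (Fin n),
      fsum c (indR S) = ((2 * (S ∩ C).card + (S ∩ ({i,j} : Finset (Fin n))).card : ℕ) : ℝ) := by
    intro S
    rw [fsum_indR]
    rw [hc]
    rw [Finset.sum_add_distrib]
    rw [Finset.sum_ite_mem, Finset.sum_ite_mem, Finset.sum_const, Finset.sum_const]
    push_cast
    simp [nsmul_eq_mul, mul_comm]
  have hbound : ∀ S ∈ B,
      (2 * (S ∩ C).card + (S ∩ ({i,j} : Finset (Fin n))).card ≤ 2 * k + 1) ∧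
      (2 * (S ∩ C).card + (S ∩ ({i,j} : Finset (Fin n))).card = 2 * k + 1 →
        S = B₁ ∨ S = B₂) := by
    intro S hS
    have hcardS : S.card = k + 1 := by
      rw [bases_card_eq hB hS h₁, hB₁eq, Finset.card_insert_of_notMem hiC]
    have hak : (S ∩ C).card ≤ k := Finset.card_le_card Finset.inter_subset_right
    have hij2 : ({i, j} : Finset (Fin n)).card = 2 := by
      rw [Finset.card_insert_of_notMem (by simp [hij]), Finset.card_singleton]
    have hb2 : (S ∩ ({i,j} : Finset (Fin n))).card ≤ 2 :=
      hij2 ▸ Finset.card_le_card Finset.inter_subset_right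
    by_cases hka : (S ∩ C).card = k
    · have hCS : C ⊆ S := by
        have h : S ∩ C = C :=
          Finset.eq_of_subset_of_card_le Finset.inter_subset_right (by omega)
        intro t ht
        rw [← h] at ht
        exact Finset.mem_of_mem_inter_left ht
      have hb1 : (S ∩ ({i,j} : Finset (Fin n))).card ≤ 1 := by
        by_contra hbb
        have hbb2 : (S ∩ ({i,j} : Finset (Fin n))).card = 2 := by omega
        have hij_sub : ({i, j} : Finset (Fin n)) ⊆ S := by
          have h : S ∩ ({i,j} : Finset (Fin n)) = ({i,j} : Finset (Fin n)) :=
            Finset.eq_of_subset_of_card_le Finset.inter_subset_right (by omega)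
          intro t ht
          rw [← h] at ht
          exact Finset.mem_of_mem_inter_left ht
        have hsub : insert i (insert j C) ⊆ S := by
          intro t ht
          rcases Finset.mem_insert.1 ht with rfl | ht
          · exact hij_sub (Finset.mem_insert_self _ _)
          rcases Finset.mem_insert.1 ht with rfl | ht
          · exact hij_sub (Finset.mem_insert_of_mem (Finset.mem_singleton_self _))
          · exact hCS ht
        have hcardI : (insert i (insert j C)).card = k + 2 := by
          rw [Finset.card_insert_of_notMem (by simp [hij, hiC]),
            Finset.card_insert_of_notMem hjC]
        have := Finset.card_le_card hsub
        omega
      refine ⟨by omega, ?_⟩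
      intro heq
      have hbb1 : (S ∩ ({i,j} : Finset (Fin n))).card = 1 := by omega
      obtain ⟨x0, hx0⟩ := Finset.card_eq_one.1 hbb1
      have hx0m : x0 ∈ S ∩ ({i,j} : Finset (Fin n)) := hx0 ▸ Finset.mem_singleton_self _
      have hx0S : x0 ∈ S := (Finset.mem_inter.1 hx0m).1
      have hx0ij : x0 = i ∨ x0 = j := by
        have := (Finset.mem_inter.1 hx0m).2
        simpa using this
      have hx0C : x0 ∉ C := by rcases hx0ij with rfl | rfl <;> assumption
      have hSsub : insert x0 C ⊆ S := Finset.insert_subset hx0S hCS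
      have hSc : (insert x0 C).card = k + 1 := Finset.card_insert_of_notMem hx0C
      have hSeq : S = insert x0 C :=
        (Finset.eq_of_subset_of_card_le hSsub (by omega)).symm
      rcases hx0ij with rfl | rfl
      · left; rw [hSeq, hB₁eq]
      · right; rw [hSeq, hB₂eq]
    · have : (S ∩ C).card < k := lt_of_le_of_ne hak hka
      exact ⟨by omega, fun h => by omega⟩
  have hbd : ∀ v ∈ V, fsum c v ≤ MM := by
    rintro v ⟨S, hS, rfl⟩
    rw [Finset.mem_coe] at hS
    rw [hfv, hMM]
    have := (hbound S hS).1
    push_cast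
    exact_mod_cast this
  have hface_sub : {v | v ∈ V ∧ fsum c v = MM} ⊆ {indR B₁, indR B₂} := by
    rintro v ⟨⟨S, hS, rfl⟩, hfvM⟩
    rw [Finset.mem_coe] at hS
    have hnat : 2 * (S ∩ C).card + (S ∩ ({i,j} : Finset (Fin n))).card = 2 * k + 1 := by
      have := hfv S ▸ hfvM
      rw [hMM] at this
      exact_mod_cast this
    rcases (hbound S hS).2 hnat with rfl | rfl
    · exact Set.mem_insert _ _
    · exact Set.mem_insert_of_mem _ rfl
  have hfB₁ : fsum c (indR B₁) = MM := by
    rw [hfv, hMM]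
    have e1 : B₁ ∩ C = C := Finset.inter_eq_right.2 hCB₁
    have e2 : B₁ ∩ ({i,j} : Finset (Fin n)) = {i} := by
      ext t
      simp only [Finset.mem_inter, Finset.mem_insert, Finset.mem_singleton]
      constructor
      · rintro ⟨htB, rfl | rfl⟩
        · rfl
        · exact absurd htB hj₂.1
      · rintro rfl
        exact ⟨hi₁.1, Or.inl rfl⟩
    rw [e1, e2]
    push_cast
    simp [hk]
  have hfB₂ : fsum c (indR B₂) = MM := by
    rw [hfv, hMM]
    have e1 : B₂ ∩ C = C := Finset.inter_eq_right.2 (by rw [hB₂eq]; exact Finset.subset_insert _ _)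
    have e2 : B₂ ∩ ({i,j} : Finset (Fin n)) = {j} := by
      ext t
      simp only [Finset.mem_inter, Finset.mem_insert, Finset.mem_singleton]
      constructor
      · rintro ⟨htB, rfl | rfl⟩
        · exact absurd htB hi₁.2
        · rfl
      · rintro rfl
        exact ⟨hj₂.2, Or.inr rfl⟩
    rw [e1, e2]
    push_cast
    simp [hk]
  have hv₁V : indR B₁ ∈ V := ⟨B₁, Finset.mem_coe.2 h₁, rfl⟩
  have hv₂V : indR B₂ ∈ V := ⟨B₂, Finset.mem_coe.2 h₂, rfl⟩
  constructor
  · refine ⟨segment_subset_convexHull hv₁V hv₂V, ?_⟩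
    intro x₁ hx₁ x₂ hx₂ p hp hpseg
    have hfp : fsum c p = MM := by
      obtain ⟨a, b, ha, hb, hab, hpe⟩ := hp
      rw [← hpe, fsum_comb, hfB₁, hfB₂, ← add_mul, hab, one_mul]
    obtain ⟨s, t2, hs, ht2, hst, hpe⟩ := hpseg
    have h1le := fsum_hull_le V c MM hbd hx₁
    have h2le := fsum_hull_le V c MM hbd hx₂
    have hcomb : s * fsum c x₁ + t2 * fsum c x₂ = MM := by
      rw [← fsum_comb, hpe, hfp]
    have hfx₁ : fsum c x₁ = MM := by nlinarith
    have hfx₂ : fsum c x₂ = MM := by nlinarith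
    refine And.left (b := x₂ ∈ segment ℝ (indR B₁) (indR B₂)) ?_
    constructor
    · have hx := fsum_hull_face V c MM hbd hx₁ hfx₁
      have hx' := convexHull_mono hface_sub hx
      rwa [convexHull_pair] at hx'
    · have hx := fsum_hull_face V c MM hbd hx₂ hfx₂
      have hx' := convexHull_mono hface_sub hx
      rwa [convexHull_pair] at hx'
  · have hne0 : indR B₁ - indR B₂ ≠ 0 := by
      rw [hroot]
      intro h
      have := congrFun h i
      simp [rootR, hij] at this
    rw [← convexHull_pair, affineSpan_convexHull, direction_affineSpan, vectorSpan_pair]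
    rw [vsub_eq_sub]
    exact finrank_span_singleton hne0

lemma forward (hB : IsMatroidBases B) {B₁ B₂ : Finset (Fin n)} (h₁ : B₁ ∈ B) (h₂ : B₂ ∈ B)
    (hedge : IsEdge (convexHull ℝ (indR '' (B : Set (Finset (Fin n)))))
      (segment ℝ (indR B₁) (indR B₂))) :
    ∃ i j : Fin n, i ≠ j ∧ indR B₁ - indR B₂ = rootR n i j := by
  classical
  obtain ⟨hext, hdim⟩ := hedge
  have hne : B₁ ≠ B₂ := by
    intro h
    subst h
    rw [segment_same] at hdim
    rw [show ({indR B₁} : Set (Fin n → ℝ)) = convexHull ℝ {indR B₁} by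
      rw [convexHull_singleton]] at hdim
    rw [affineSpan_convexHull, direction_affineSpan, vectorSpan_singleton] at hdim
    simp at hdim
  have hcards : B₁.card = B₂.card := bases_card_eq hB h₁ h₂
  have hd1 : (B₁ \ B₂).Nonempty := by
    rw [Finset.sdiff_nonempty]
    intro hsub
    exact hne (Finset.eq_of_subset_of_card_le hsub (le_of_eq hcards.symm))
  obtain ⟨x, hx⟩ := hd1
  have hcard1 : (B₁ \ B₂).card = 1 := by
    by_contra hc
    have h2le : 2 ≤ (B₁ \ B₂).card := by
      have := Finset.card_pos.2 ⟨x, hx⟩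
      omega
    obtain ⟨x', hx', hx'x⟩ := Finset.exists_mem_ne (s := B₁ \ B₂) (by omega) x
    obtain ⟨y, hy, hA₁B, hA₂B⟩ := bases_symm_exchange hB h₁ h₂ hx
    rw [Finset.mem_sdiff] at hx hx' hy
    set A₁ := insert y (B₁.erase x) with hA₁
    set A₂ := insert x (B₂.erase y) with hA₂
    have hxy : x ≠ y := fun h => hy.2 (h ▸ hx.1)
    have hsum : indR A₁ + indR A₂ = indR B₁ + indR B₂ := by
      funext t
      simp only [Pi.add_apply, indR, hA₁, hA₂]
      rcases eq_or_ne t x with rfl | htx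
      · simp [Finset.mem_insert, Finset.mem_erase, hxy, hx.1, hx.2]
      rcases eq_or_ne t y with rfl | hty
      · simp [Finset.mem_insert, Finset.mem_erase, Ne.symm hxy, hy.1, hy.2]
      · have e1 : (t ∈ insert y (B₁.erase x)) ↔ (t ∈ B₁) := by
          simp [Finset.mem_insert, Finset.mem_erase, hty, htx]
        have e2 : (t ∈ insert x (B₂.erase y)) ↔ (t ∈ B₂) := by
          simp [Finset.mem_insert, Finset.mem_erase, hty, htx]
        simp only [e1, e2]
    set m : Fin n → ℝ := (1/2 : ℝ) • indR B₁ + (1/2 : ℝ) • indR B₂ with hm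
    have hmE : m ∈ segment ℝ (indR B₁) (indR B₂) :=
      ⟨1/2, 1/2, by norm_num, by norm_num, by norm_num, rfl⟩
    have hmo : m ∈ openSegment ℝ (indR A₁) (indR A₂) := by
      refine ⟨1/2, 1/2, by norm_num, by norm_num, by norm_num, ?_⟩
      rw [hm]
      rw [show (1/2 : ℝ) • indR A₁ + (1/2 : ℝ) • indR A₂ =
        (1/2 : ℝ) • (indR A₁ + indR A₂) by rw [smul_add], hsum, smul_add]
    have hA₁P : indR A₁ ∈ convexHull ℝ (indR '' (B : Set (Finset (Fin n)))) :=
      subset_convexHull _ _ ⟨A₁, Finset.mem_coe.2 hA₁B, rfl⟩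
    have hA₂P : indR A₂ ∈ convexHull ℝ (indR '' (B : Set (Finset (Fin n)))) :=
      subset_convexHull _ _ ⟨A₂, Finset.mem_coe.2 hA₂B, rfl⟩
    have hA₁seg := (hext.2 hA₁P hA₂P hmE hmo)
    rcases indR_mem_segment hA₁seg with h | h
    · have : y ∈ B₁ := by rw [← h]; exact Finset.mem_insert_self _ _
      exact hy.2 this
    · have : x' ∈ B₂ := by
        rw [← h]
        exact Finset.mem_insert_of_mem (Finset.mem_erase.2 ⟨hx'x, hx'.1⟩)
      exact hx'.2 this
  have hcard2 : (B₂ \ B₁).card = 1 := by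
    have e1 := Finset.card_sdiff_add_card_inter B₁ B₂
    have e2 := Finset.card_sdiff_add_card_inter B₂ B₁
    rw [Finset.inter_comm] at e2
    omega
  obtain ⟨i, hi⟩ := Finset.card_eq_one.1 hcard1
  obtain ⟨j, hj⟩ := Finset.card_eq_one.1 hcard2
  have hiB : i ∈ B₁ \ B₂ := hi ▸ Finset.mem_singleton_self _
  have hjB : j ∈ B₂ \ B₁ := hj ▸ Finset.mem_singleton_self _
  rw [Finset.mem_sdiff] at hiB hjB
  have hij : i ≠ j := fun h => hjB.2 (h ▸ hiB.1)
  refine ⟨i, j, hij, ?_⟩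
  funext t
  simp only [Pi.sub_apply, indR, rootR]
  rcases eq_or_ne t i with rfl | hti
  · simp [hiB.1, hiB.2, hij]
  rcases eq_or_ne t j with rfl | htj
  · simp [hjB.1, hjB.2, Ne.symm hij, hti]
  · have h1 : t ∉ B₁ \ B₂ := by rw [hi]; simp [hti]
    have h2 : t ∉ B₂ \ B₁ := by rw [hj]; simp [htj]
    rw [Finset.mem_sdiff] at h1 h2
    push_neg at h1 h2
    rw [if_neg hti, if_neg htj]
    by_cases ht : t ∈ B₁
    · rw [if_pos ht, if_pos (h1 ht)]; norm_num
    · have : t ∉ B₂ := fun h => ht (h2 h)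
      rw [if_neg ht, if_neg this]

end Main

end MPaux

/-- Gel'fand–Goresky–MacPherson–Serganova: two vertices
`v^{B₁}, v^{B₂}` of a matroid polytope form an edge iff their difference is a
root `e_i - e_j`. -/
theorem matroid_polytope_edge_iff_root (n : ℕ) (B : Finset (Finset (Fin n)))
    (hB : IsMatroidBases B) (B₁ B₂ : Finset (Fin n)) (h₁ : B₁ ∈ B) (h₂ : B₂ ∈ B) :
    IsEdge (convexHull ℝ (indR '' (B : Set (Finset (Fin n)))))
        (segment ℝ (indR B₁) (indR B₂)) ↔
      ∃ i j : Fin n, i ≠ j ∧ indR B₁ - indR B₂ = rootR n i j := by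
  constructor
  · exact fun h => MPaux.forward hB h₁ h₂ h
  · rintro ⟨i, j, hij, hroot⟩
    exact MPaux.backward hB h₁ h₂ hij hroot
end

section
/- Let A ⊂ Q(R) be a finite set such that every edge of the convex hull of A is parallel to a root of SL(n,C), and A equals the intersection of its convex hull with Q(R) (i.e., A is root-saturated). If B is another root-saturated set and the convex hulls of A and B intersect, then A ∩ B is nonempty. -/
open Finset Pointwise

set_option maxHeartbeats 1000000

-- single basis vectors
def svZ {n : ℕ} (m : Fin n) : Fin n → ℤ := fun t => if t = m then 1 else 0
def svR {n : ℕ} (m : Fin n) : Fin n → ℝ := fun t => if t = m then 1 else 0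

@[simp] lemma svZ_apply {n : ℕ} (m t : Fin n) : svZ m t = if t = m then 1 else 0 := rfl
@[simp] lemma svR_apply {n : ℕ} (m t : Fin n) : svR m t = if t = m then 1 else 0 := rfl
@[simp] lemma coeZ_apply {n : ℕ} (v : Fin n → ℤ) (t : Fin n) : coeZ v t = (v t : ℝ) := rfl

lemma coeZ_injective {n : ℕ} : Function.Injective (coeZ (n := n)) := by
  intro u v h
  funext t
  have := congrFun h t
  simpa [coeZ] using this

lemma sum_svZ {n : ℕ} (m : Fin n) : ∑ t, svZ m t = 1 := by
  simp [svZ]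

/-- BOX: an integer box with a feasible real sum-zero point contains an integer
sum-zero point. -/
lemma box_lemma {n : ℕ} : ∀ (k : ℕ) (L U : Fin n → ℤ), (∀ i, L i ≤ U i) →
    (∑ i, L i = -(k : ℤ)) → 0 ≤ ∑ i, U i →
    ∃ z : Fin n → ℤ, (∀ i, L i ≤ z i ∧ z i ≤ U i) ∧ ∑ i, z i = 0 := by
  intro k
  induction k with
  | zero =>
    intro L U hLU hL _
    exact ⟨L, fun i => ⟨le_refl _, hLU i⟩, by simpa using hL⟩
  | succ k ih =>
    intro L U hLU hL hU
    have hlt : ∑ i, L i < ∑ i, U i := by omega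
    have hex : ∃ i, L i < U i := by
      by_contra h
      push_neg at h
      have : ∑ i, U i ≤ ∑ i, L i := Finset.sum_le_sum (fun i _ => h i)
      omega
    obtain ⟨i, hi⟩ := hex
    have hmem : i ∈ (Finset.univ : Finset (Fin n)) := Finset.mem_univ i
    set L' := Function.update L i (L i + 1) with hL'
    have hsum' : ∑ t, L' t = (∑ t, L t) + 1 := by
      rw [hL', Finset.sum_update_of_mem hmem]
      rw [Finset.sum_eq_add_sum_sdiff_singleton_of_mem hmem L]
      ring
    have h1 : ∀ t, L' t ≤ U t := by
      intro t
      by_cases ht : t = i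
      · subst ht; simp [hL', Function.update_self]; omega
      · simp [hL', Function.update_of_ne ht]; exact hLU t
    obtain ⟨z, hz1, hz2⟩ := ih L' U h1 (by omega) hU
    refine ⟨z, fun t => ⟨?_, (hz1 t).2⟩, hz2⟩
    have := (hz1 t).1
    by_cases ht : t = i
    · subst ht; simp [hL', Function.update_self] at this; omega
    · simpa [hL', Function.update_of_ne ht] using this

lemma exists_int_in_box {n : ℕ} (L U : Fin n → ℤ) (hLU : ∀ i, L i ≤ U i)
    (hL : ∑ i, L i ≤ 0) (hU : 0 ≤ ∑ i, U i) :
    ∃ z : Fin n → ℤ, (∀ i, L i ≤ z i ∧ z i ≤ U i) ∧ ∑ i, z i = 0 := by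
  refine box_lemma (-(∑ i, L i)).toNat L U hLU ?_ hU
  omega

def RootM {n : ℕ} (z : Fin n → ℤ) : Prop :=
  ∃ i j c, i ≠ j ∧ c ≠ (0:ℤ) ∧ z = c • rootZ n i j
lemma rootM_support {n : ℕ} {z : Fin n → ℤ} (h : RootM z) :
    ∃ s t : Fin n, s ≠ t ∧ ∀ u, u ≠ s → u ≠ t → z u = 0 := by
  obtain ⟨i, j, c, hij, hc, hz⟩ := h
  exact ⟨i, j, hij, fun u hui huj => by simp [hz, rootZ, hui, huj]⟩
lemma rootM_three {n : ℕ} {z : Fin n → ℤ} (h : RootM z) (p q r : Fin n)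
    (hpq : p ≠ q) (hpr : p ≠ r) (hqr : q ≠ r)
    (hp : z p ≠ 0) (hq : z q ≠ 0) (hr : z r ≠ 0) : False := by
  obtain ⟨s, t, hst, hzero⟩ := rootM_support h
  have hps : p = s ∨ p = t := by
    by_contra hc; push_neg at hc; exact hp (hzero p hc.1 hc.2)
  have hqs : q = s ∨ q = t := by
    by_contra hc; push_neg at hc; exact hq (hzero q hc.1 hc.2)
  have hrs : r = s ∨ r = t := by
    by_contra hc; push_neg at hc; exact hr (hzero r hc.1 hc.2)
  rcases hps with rfl | rfl <;> rcases hqs with h2 | h2 <;> rcases hrs with h3 | h3 <;>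
    simp_all

lemma ext_lemma {n : ℕ} {w x : Fin n → ℤ} {a : ℤ} (ha : a ≠ 0) {m1 m2 m3 : Fin n}
    (h12 : m1 ≠ m2) (h13 : m1 ≠ m3) (h23 : m2 ≠ m3)
    (hx2 : x ≠ w + a • svZ m2)
    (hr1 : RootM (x - (w + a • svZ m1))) (hr2 : RootM (x - (w + a • svZ m2)))
    (hr3 : RootM (x - (w + a • svZ m3))) :
    ∃ p, x = w + a • svZ p := by
  obtain ⟨s, t, c, hst, hc, heq⟩ := hr1
  have hy : ∀ u, x u - w u = (if u = m1 then a else 0) + (if u = s then c else 0)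
      - (if u = t then c else 0) := by
    intro u
    have h := congrFun heq u
    simp [rootZ, svZ, Pi.sub_apply, Pi.add_apply, Pi.smul_apply, smul_eq_mul, mul_sub] at h
    split_ifs at h ⊢ <;> omega
  have mkpt : ∀ p : Fin n, (∀ u, x u - w u = if u = p then a else 0) →
      x = w + a • svZ p := by
    intro p hp; funext u
    have h := hp u
    simp only [Pi.add_apply, Pi.smul_apply, svZ_apply, smul_eq_mul]
    split_ifs at h ⊢ <;> omega
  have zval : ∀ (m u : Fin n), (x - (w + a • svZ m)) u = x u - w u -
      (if u = m then a else 0) := by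
    intro m u
    simp only [Pi.sub_apply, Pi.add_apply, Pi.smul_apply, svZ_apply, smul_eq_mul]
    split_ifs <;> omega
  by_cases hsm1 : s = m1
  · by_cases htm2 : t = m2
    · -- A1 : y = (a+c) e_s − c e_t  (s=m1, t=m2)
      by_cases hac : a + c = 0
      · exact absurd (mkpt m2 (fun u => by
          have h := hy u; split_ifs at h ⊢ <;> omega)) hx2
      · exact absurd (rootM_three hr3 m1 m2 m3 h12 h13 h23
          (by rw [zval]; have h := hy m1; split_ifs at h ⊢ <;> omega)
          (by rw [zval]; have h := hy m2; split_ifs at h ⊢ <;> omega)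
          (by rw [zval]; have h := hy m3; split_ifs at h ⊢ <;> omega)) id
    · -- A2 : s=m1, t∉{m1,m2}
      by_cases hac : a + c = 0
      · exact ⟨t, mkpt t (fun u => by
          have h := hy u; split_ifs at h ⊢ <;> omega)⟩
      · exact absurd (rootM_three hr2 m1 t m2 (by omega) h12 htm2
          (by rw [zval]; have h := hy m1; split_ifs at h ⊢ <;> omega)
          (by rw [zval]; have h := hy t; split_ifs at h ⊢ <;> omega)
          (by rw [zval]; have h := hy m2; split_ifs at h ⊢ <;> omega)) id
  · by_cases htm1 : t = m1
    · by_cases hsm2 : s = m2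
      · -- B1 : y = (a−c) e_t + c e_s  (t=m1, s=m2)
        by_cases hac : a - c = 0
        · exact absurd (mkpt m2 (fun u => by
            have h := hy u; split_ifs at h ⊢ <;> omega)) hx2
        · exact absurd (rootM_three hr3 m1 m2 m3 h12 h13 h23
            (by rw [zval]; have h := hy m1; split_ifs at h ⊢ <;> omega)
            (by rw [zval]; have h := hy m2; split_ifs at h ⊢ <;> omega)
            (by rw [zval]; have h := hy m3; split_ifs at h ⊢ <;> omega)) id
      · -- B2 : t=m1, s∉{m1,m2}
        by_cases hac : a - c = 0
        · exact ⟨s, mkpt s (fun u => by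
            have h := hy u; split_ifs at h ⊢ <;> omega)⟩
        · exact absurd (rootM_three hr2 m1 s m2 (by omega) h12 hsm2
            (by rw [zval]; have h := hy m1; split_ifs at h ⊢ <;> omega)
            (by rw [zval]; have h := hy s; split_ifs at h ⊢ <;> omega)
            (by rw [zval]; have h := hy m2; split_ifs at h ⊢ <;> omega)) id
    · -- Case C : s ≠ m1, t ≠ m1
      by_cases hsm2 : s = m2
      · -- C1 : y = a e_m1 + c e_s − c e_t, s=m2, t∉{m1,m2}
        by_cases hac : c - a = 0
        · exfalso
          by_cases htm3 : t = m3
          · exact rootM_three hr3 m1 m2 m3 h12 h13 h23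
              (by rw [zval]; have h := hy m1; split_ifs at h ⊢ <;> omega)
              (by rw [zval]; have h := hy m2; split_ifs at h ⊢ <;> omega)
              (by rw [zval]; have h := hy m3; split_ifs at h ⊢ <;> omega)
          · exact rootM_three hr3 m1 m2 t h12 (by omega) (by omega)
              (by rw [zval]; have h := hy m1; split_ifs at h ⊢ <;> omega)
              (by rw [zval]; have h := hy m2; split_ifs at h ⊢ <;> omega)
              (by rw [zval]; have h := hy t; split_ifs at h ⊢ <;> omega)
        · exact absurd (rootM_three hr2 m1 m2 t h12 (by omega) (by omega)
            (by rw [zval]; have h := hy m1; split_ifs at h ⊢ <;> omega)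
            (by rw [zval]; have h := hy m2; split_ifs at h ⊢ <;> omega)
            (by rw [zval]; have h := hy t; split_ifs at h ⊢ <;> omega)) id
      · by_cases htm2 : t = m2
        · -- C2 : y = a e_m1 + c e_s − c e_t, t=m2, s∉{m1,m2}
          by_cases hac : c + a = 0
          · exfalso
            by_cases hsm3 : s = m3
            · exact rootM_three hr3 m1 m2 m3 h12 h13 h23
                (by rw [zval]; have h := hy m1; split_ifs at h ⊢ <;> omega)
                (by rw [zval]; have h := hy m2; split_ifs at h ⊢ <;> omega)
                (by rw [zval]; have h := hy m3; split_ifs at h ⊢ <;> omega)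
            · exact rootM_three hr3 m1 m2 s h12 (by omega) (by omega)
                (by rw [zval]; have h := hy m1; split_ifs at h ⊢ <;> omega)
                (by rw [zval]; have h := hy m2; split_ifs at h ⊢ <;> omega)
                (by rw [zval]; have h := hy s; split_ifs at h ⊢ <;> omega)
          · exact absurd (rootM_three hr2 m1 s m2 (by omega) h12 hsm2
              (by rw [zval]; have h := hy m1; split_ifs at h ⊢ <;> omega)
              (by rw [zval]; have h := hy s; split_ifs at h ⊢ <;> omega)
              (by rw [zval]; have h := hy m2; split_ifs at h ⊢ <;> omega)) id
        · -- C3 : s,t ∉ {m1,m2}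
          exact absurd (rootM_three hr2 m1 m2 s h12 (by omega) (by omega)
            (by rw [zval]; have h := hy m1; split_ifs at h ⊢ <;> omega)
            (by rw [zval]; have h := hy m2; split_ifs at h ⊢ <;> omega)
            (by rw [zval]; have h := hy s; split_ifs at h ⊢ <;> omega)) id

lemma tri_lemma {n : ℕ} {u v x : Fin n → ℤ}
    (hruv : RootM (u - v)) (hrxv : RootM (x - v)) (hrxu : RootM (x - u))
    (nocoll : ∀ i j : Fin n, i ≠ j → ∀ a b : ℤ, u - v = a • rootZ n i j →
      x - v = b • rootZ n i j → False) :
    ∃ (w : Fin n → ℤ) (a : ℤ) (i j k : Fin n), a ≠ 0 ∧ i ≠ j ∧ i ≠ k ∧ j ≠ k ∧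
      u = w + a • svZ i ∧ v = w + a • svZ j ∧ x = w + a • svZ k := by
  obtain ⟨i, j, a, hij, ha, huv'⟩ := hruv
  obtain ⟨k, l, b, hkl, hb, hxv'⟩ := hrxv
  have hval1 : ∀ t, u t - v t = (if t = i then a else 0) - (if t = j then a else 0) := by
    intro t
    have h := congrFun huv' t
    simp [rootZ, Pi.sub_apply, Pi.smul_apply, smul_eq_mul, mul_sub] at h
    split_ifs at h ⊢ <;> omega
  have hval2 : ∀ t, x t - v t = (if t = k then b else 0) - (if t = l then b else 0) := by
    intro t
    have h := congrFun hxv' t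
    simp [rootZ, Pi.sub_apply, Pi.smul_apply, smul_eq_mul, mul_sub] at h
    split_ifs at h ⊢ <;> omega
  have mk3 : ∀ (W : Fin n → ℤ) (A : ℤ) (I J K : Fin n),
      (∀ t, u t = W t + (if t = I then A else 0)) →
      (∀ t, v t = W t + (if t = J then A else 0)) →
      (∀ t, x t = W t + (if t = K then A else 0)) →
      A ≠ 0 → I ≠ J → I ≠ K → J ≠ K →
      ∃ (w : Fin n → ℤ) (a : ℤ) (i j k : Fin n), a ≠ 0 ∧ i ≠ j ∧ i ≠ k ∧ j ≠ k ∧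
        u = w + a • svZ i ∧ v = w + a • svZ j ∧ x = w + a • svZ k := by
    intro W A I J K hu hv hx hA hIJ hIK hJK
    refine ⟨W, A, I, J, K, hA, hIJ, hIK, hJK, ?_, ?_, ?_⟩ <;> funext t <;>
      simp only [Pi.add_apply, Pi.smul_apply, svZ_apply, smul_eq_mul] <;>
      [have h := hu t; have h := hv t; have h := hx t] <;> split_ifs at h ⊢ <;> omega
  by_cases hki : k = i
  · by_cases hlj : l = j
    · exfalso
      rw [hki, hlj] at hxv'
      exact nocoll i j hij a b huv' hxv'
    · -- case 2 : k=i, l∉{i,j}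
      by_cases hba : b = a
      · -- inverted simplex, W = v + a • svZ i, A = -a, triple (j, i, l)
        refine mk3 (v + a • svZ i) (-a) j i l ?_ ?_ ?_ (by omega) (by omega)
          (by omega) (by omega) <;> intro t <;>
          simp only [Pi.add_apply, Pi.smul_apply, svZ_apply, smul_eq_mul] <;>
          [have h1 := hval1 t; have h1 := hval1 t; have h1 := hval1 t] <;>
          have h2 := hval2 t <;> split_ifs at h1 h2 ⊢ <;> omega
      · exact absurd (rootM_three hrxu i l j (by omega) hij (by omega)
          (by simp only [Pi.sub_apply]; have h1 := hval1 i; have h2 := hval2 i;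
              split_ifs at h1 h2 <;> omega)
          (by simp only [Pi.sub_apply]; have h1 := hval1 l; have h2 := hval2 l;
              split_ifs at h1 h2 <;> omega)
          (by simp only [Pi.sub_apply]; have h1 := hval1 j; have h2 := hval2 j;
              split_ifs at h1 h2 <;> omega)) id
  · by_cases hkj : k = j
    · by_cases hli : l = i
      · exfalso
        have hxvneg : x - v = (-b) • rootZ n i j := by
          funext t
          have h2 := hval2 t
          simp only [Pi.sub_apply, Pi.smul_apply, smul_eq_mul, rootZ, mul_sub]
          split_ifs at h2 ⊢ <;> omega
        exact nocoll i j hij a (-b) huv' hxvneg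
      · -- case 3 : k=j, l∉{i,j} ; if b+a=0 then x = w + a e_l (direct)
        by_cases hba : b + a = 0
        · refine mk3 (v - a • svZ j) a i j l ?_ ?_ ?_ ha hij (by omega) (by omega) <;>
            intro t <;>
            simp only [Pi.sub_apply, Pi.smul_apply, svZ_apply, smul_eq_mul] <;>
            [have h1 := hval1 t; have h1 := hval1 t; have h1 := hval1 t] <;>
            have h2 := hval2 t <;> split_ifs at h1 h2 ⊢ <;> omega
        · exact absurd (rootM_three hrxu j l i (by omega) (by omega) (by omega)
            (by simp only [Pi.sub_apply]; have h1 := hval1 j; have h2 := hval2 j;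
                split_ifs at h1 h2 <;> omega)
            (by simp only [Pi.sub_apply]; have h1 := hval1 l; have h2 := hval2 l;
                split_ifs at h1 h2 <;> omega)
            (by simp only [Pi.sub_apply]; have h1 := hval1 i; have h2 := hval2 i;
                split_ifs at h1 h2 <;> omega)) id
    · by_cases hli : l = i
      · -- case 4 : l=i, k∉{i,j}
        by_cases hba : b + a = 0
        · refine mk3 (v + a • svZ i) (-a) j i k ?_ ?_ ?_ (by omega) (by omega)
            (by omega) (by omega) <;> intro t <;>
            simp only [Pi.add_apply, Pi.smul_apply, svZ_apply, smul_eq_mul] <;>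
            [have h1 := hval1 t; have h1 := hval1 t; have h1 := hval1 t] <;>
            have h2 := hval2 t <;> split_ifs at h1 h2 ⊢ <;> omega
        · exact absurd (rootM_three hrxu k i j (by omega) (by omega) hij
            (by simp only [Pi.sub_apply]; have h1 := hval1 k; have h2 := hval2 k;
                split_ifs at h1 h2 <;> omega)
            (by simp only [Pi.sub_apply]; have h1 := hval1 i; have h2 := hval2 i;
                split_ifs at h1 h2 <;> omega)
            (by simp only [Pi.sub_apply]; have h1 := hval1 j; have h2 := hval2 j;
                split_ifs at h1 h2 <;> omega)) id
      · by_cases hlj : l = j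
        · -- case 5 : l=j, k∉{i,j}
          by_cases hba : a - b = 0
          · refine mk3 (v - a • svZ j) a i j k ?_ ?_ ?_ ha hij (by omega) (by omega) <;>
              intro t <;>
              simp only [Pi.sub_apply, Pi.smul_apply, svZ_apply, smul_eq_mul] <;>
              [have h1 := hval1 t; have h1 := hval1 t; have h1 := hval1 t] <;>
              have h2 := hval2 t <;> split_ifs at h1 h2 ⊢ <;> omega
          · exact absurd (rootM_three hrxu k j i (by omega) (by omega) (by omega)
              (by simp only [Pi.sub_apply]; have h1 := hval1 k; have h2 := hval2 k;
                  split_ifs at h1 h2 <;> omega)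
              (by simp only [Pi.sub_apply]; have h1 := hval1 j; have h2 := hval2 j;
                  split_ifs at h1 h2 <;> omega)
              (by simp only [Pi.sub_apply]; have h1 := hval1 i; have h2 := hval2 i;
                  split_ifs at h1 h2 <;> omega)) id
        · -- case 6 : disjoint
          exact absurd (rootM_three hrxu k i j (by omega) (by omega) hij
            (by simp only [Pi.sub_apply]; have h1 := hval1 k; have h2 := hval2 k;
                split_ifs at h1 h2 <;> omega)
            (by simp only [Pi.sub_apply]; have h1 := hval1 i; have h2 := hval2 i;
                split_ifs at h1 h2 <;> omega)
            (by simp only [Pi.sub_apply]; have h1 := hval1 j; have h2 := hval2 j;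
                split_ifs at h1 h2 <;> omega)) id

lemma pair_lemma {n : ℕ} {u v : Fin n → ℤ} (hruv : RootM (u - v)) :
    ∃ (w : Fin n → ℤ) (a : ℤ) (i j : Fin n), a ≠ 0 ∧ i ≠ j ∧
      u = w + a • svZ i ∧ v = w + a • svZ j := by
  obtain ⟨i, j, a, hij, ha, huv'⟩ := hruv
  refine ⟨v - a • svZ j, a, i, j, ha, hij, ?_, ?_⟩ <;> funext t <;>
    have h := congrFun huv' t <;>
    simp only [Pi.add_apply, Pi.sub_apply, Pi.smul_apply, svZ_apply, smul_eq_mul,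
      rootZ, mul_sub] at h ⊢ <;> split_ifs at h ⊢ <;> omega

lemma class_lemma {n : ℕ} (V : Finset (Fin n → ℤ)) (hcard : 2 ≤ V.card)
    (hpair : ∀ u ∈ V, ∀ v ∈ V, u ≠ v → RootM (u - v))
    (nocoll : ∀ u ∈ V, ∀ v ∈ V, ∀ x ∈ V, u ≠ v → x ≠ u → x ≠ v →
      ∀ i j : Fin n, i ≠ j → ∀ a b : ℤ, u - v = a • rootZ n i j →
        x - v = b • rootZ n i j → False) :
    ∃ (w : Fin n → ℤ) (a : ℤ) (S : Finset (Fin n)), a ≠ 0 ∧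
      V = S.image (fun m => w + a • svZ m) := by
  induction V using Finset.strongInduction with
  | _ V ih =>
  rcases eq_or_lt_of_le hcard with h2 | h3
  · -- card = 2
    obtain ⟨p, q, hpq, hV⟩ := Finset.card_eq_two.mp h2.symm
    obtain ⟨w, a, i, j, ha, hij, hu, hv⟩ := pair_lemma
      (hpair p (by simp [hV]) q (by simp [hV]) hpq)
    refine ⟨w, a, {i, j}, ha, ?_⟩
    rw [Finset.image_insert, Finset.image_singleton, hV, ← hu, ← hv]
  rcases eq_or_lt_of_le (Nat.succ_le_of_lt h3) with h3' | h4
  · -- card = 3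
    obtain ⟨p, q, r, hpq, hpr, hqr, hV⟩ := Finset.card_eq_three.mp h3'.symm
    have hp : p ∈ V := by simp [hV]
    have hq : q ∈ V := by simp [hV]
    have hr : r ∈ V := by simp [hV]
    obtain ⟨w, a, i, j, k, ha, hij, hik, hjk, hu, hv, hx⟩ := tri_lemma
      (hpair p hp q hq hpq) (hpair r hr q hq hqr.symm) (hpair r hr p hp hpr.symm)
      (fun i j hij a b h1 h2 =>
        nocoll p hp q hq r hr hpq hpr.symm hqr.symm i j hij a b h1 h2)
    refine ⟨w, a, {i, j, k}, ha, ?_⟩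
    rw [Finset.image_insert, Finset.image_insert, Finset.image_singleton,
      hV, ← hu, ← hv, ← hx]
  · -- card ≥ 4
    have hne : V.Nonempty := by
      rw [← Finset.card_pos]; omega
    obtain ⟨x, hx⟩ := hne
    set V' := V.erase x with hV'
    have hsub : V' ⊂ V := Finset.erase_ssubset hx
    have hcard' : V'.card = V.card - 1 := Finset.card_erase_of_mem hx
    obtain ⟨w, a, S, ha, hVS⟩ := ih V' hsub (by omega)
      (fun u hu v hv huv => hpair u (Finset.mem_of_mem_erase hu)
        v (Finset.mem_of_mem_erase hv) huv)
      (fun u hu v hv y hy huv hyu hyv i j hij a b h1 h2 =>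
        nocoll u (Finset.mem_of_mem_erase hu) v (Finset.mem_of_mem_erase hv)
          y (Finset.mem_of_mem_erase hy) huv hyu hyv i j hij a b h1 h2)
    have hScard : 3 ≤ S.card := by
      have := Finset.card_image_le (s := S) (f := fun m => w + a • svZ m)
      rw [← hVS] at this
      omega
    obtain ⟨T, hTS, hT3⟩ := Finset.exists_subset_card_eq hScard
    obtain ⟨m1, m2, m3, h12, h13, h23, hT⟩ := Finset.card_eq_three.mp hT3
    have hmem : ∀ m ∈ S, w + a • svZ m ∈ V' := by
      intro m hm; rw [hVS]; exact Finset.mem_image_of_mem _ hm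
    have hm1 : m1 ∈ S := hTS (by simp [hT])
    have hm2 : m2 ∈ S := hTS (by simp [hT])
    have hm3 : m3 ∈ S := hTS (by simp [hT])
    have hxV' : x ∉ V' := Finset.notMem_erase x V
    have hxne : ∀ m ∈ S, x ≠ w + a • svZ m := by
      intro m hm h
      exact hxV' (h ▸ hmem m hm)
    have hroot : ∀ m ∈ S, RootM (x - (w + a • svZ m)) := by
      intro m hm
      exact hpair x hx _ (Finset.mem_of_mem_erase (hmem m hm)) (hxne m hm)
    obtain ⟨p, hp⟩ := ext_lemma ha h12 h13 h23 (hxne m2 hm2)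
      (hroot m1 hm1) (hroot m2 hm2) (hroot m3 hm3)
    have hpS : p ∉ S := by
      intro hpS
      exact hxV' (hp ▸ hmem p hpS)
    refine ⟨w, a, insert p S, ha, ?_⟩
    rw [Finset.image_insert, ← hVS, ← hp, Finset.insert_erase hx]

lemma simplex_hull {n : ℕ} (S : Finset (Fin n)) (ω : Fin n → ℝ) (α : ℝ) (hα : α ≠ 0)
    (x : Fin n → ℝ) :
    x ∈ convexHull ℝ ((fun m => ω + α • svR m) '' (S : Set (Fin n))) ↔
      (∀ i ∉ S, x i = ω i) ∧ (∀ i ∈ S, min 0 α ≤ x i - ω i ∧ x i - ω i ≤ max 0 α) ∧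
      ∑ i, (x i - ω i) = α := by
  constructor
  · intro hx
    have hsub : convexHull ℝ ((fun m => ω + α • svR m) '' (S : Set (Fin n))) ⊆
        {y : Fin n → ℝ | (∀ i ∉ S, y i = ω i) ∧
          (∀ i ∈ S, min 0 α ≤ y i - ω i ∧ y i - ω i ≤ max 0 α) ∧
          ∑ i, (y i - ω i) = α} := by
      apply convexHull_min
      · rintro - ⟨m, hm, rfl⟩
        refine ⟨?_, ?_, ?_⟩
        · intro i hi
          have : i ≠ m := fun h => hi (h ▸ hm)
          simp [this]
        · intro i _
          simp only [Pi.add_apply, Pi.smul_apply, svR_apply, smul_eq_mul]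
          split_ifs <;> constructor <;>
            simp [min_le_left, min_le_right, le_max_left, le_max_right]
        · have : ∀ i, (ω + α • svR m) i - ω i = if i = m then α else 0 := by
            intro i
            simp only [Pi.add_apply, Pi.smul_apply, svR_apply, smul_eq_mul]
            split_ifs <;> ring
          rw [Finset.sum_congr rfl (fun i _ => this i)]
          simp
      · rintro y ⟨hy1, hy2, hy3⟩ z ⟨hz1, hz2, hz3⟩ p q hp hq hpq
        refine ⟨?_, ?_, ?_⟩
        · intro i hi
          simp only [Pi.add_apply, Pi.smul_apply, smul_eq_mul]
          rw [hy1 i hi, hz1 i hi, ← add_mul, hpq, one_mul]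
        · intro i hi
          obtain ⟨hy2a, hy2b⟩ := hy2 i hi
          obtain ⟨hz2a, hz2b⟩ := hz2 i hi
          simp only [Pi.add_apply, Pi.smul_apply, smul_eq_mul]
          have expand : p * y i + q * z i - ω i = p * (y i - ω i) + q * (z i - ω i) := by
            linear_combination (ω i) * hpq
          rw [expand]
          constructor
          · have k1 := mul_le_mul_of_nonneg_left hy2a hp
            have k2 := mul_le_mul_of_nonneg_left hz2a hq
            have key : p * (0 ⊓ α) + q * (0 ⊓ α) = 0 ⊓ α := by
              rw [← add_mul, hpq, one_mul]
            linarith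
          · have k1 := mul_le_mul_of_nonneg_left hy2b hp
            have k2 := mul_le_mul_of_nonneg_left hz2b hq
            have key : p * (0 ⊔ α) + q * (0 ⊔ α) = 0 ⊔ α := by
              rw [← add_mul, hpq, one_mul]
            linarith
        · have : ∀ i, (p • y + q • z) i - ω i = p * (y i - ω i) + q * (z i - ω i) := by
            intro i
            simp only [Pi.add_apply, Pi.smul_apply, smul_eq_mul]
            linear_combination (ω i) * hpq
          rw [Finset.sum_congr rfl (fun i _ => this i), Finset.sum_add_distrib,
            ← Finset.mul_sum, ← Finset.mul_sum, hy3, hz3]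
          linear_combination α * hpq
    exact hsub hx
  · rintro ⟨h1, h2, h3⟩
    have hS : S.Nonempty := by
      by_contra hS
      rw [Finset.not_nonempty_iff_eq_empty] at hS
      subst hS
      have : ∑ i, (x i - ω i) = 0 :=
        Finset.sum_eq_zero (fun i _ => by rw [h1 i (Finset.notMem_empty i)]; ring)
      exact hα (by rw [← h3, this])
    set wt : Fin n → ℝ := fun m => (x m - ω m) / α with hwt
    have hsumS : ∑ m ∈ S, (x m - ω m) = α := by
      rw [← h3]
      rw [← Finset.sum_subset (Finset.subset_univ S)]
      intro i _ hi
      rw [h1 i hi]; ring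
    have hwsum : ∑ m ∈ S, wt m = 1 := by
      rw [hwt]
      simp only []
      rw [← Finset.sum_div, hsumS, div_self hα]
    have hw0 : ∀ m ∈ S, 0 ≤ wt m := by
      intro m hm
      obtain ⟨ha, hb⟩ := h2 m hm
      rcases lt_or_gt_of_ne hα with hneg | hpos
      · have : x m - ω m ≤ 0 := le_trans hb (by simp [le_of_lt hneg])
        exact div_nonneg_iff.mpr (Or.inr ⟨this, le_of_lt hneg⟩)
      · have : 0 ≤ x m - ω m := le_trans (by simp [le_of_lt hpos]) ha
        exact div_nonneg this (le_of_lt hpos)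
    have hcm := Finset.centerMass_mem_convexHull (s := (fun m => ω + α • svR m) '' (S : Set (Fin n)))
      (z := fun m => ω + α • svR m) S hw0 (by rw [hwsum]; norm_num)
      (fun m hm => Set.mem_image_of_mem _ (Finset.mem_coe.mpr hm))
    have heq : S.centerMass wt (fun m => ω + α • svR m) = x := by
      rw [Finset.centerMass_eq_of_sum_1 _ _ hwsum]
      funext t
      rw [Finset.sum_apply]
      have : ∀ m ∈ S, (wt m • (ω + α • svR m)) t =
          wt m * ω t + (if t = m then wt m * α else 0) := by
        intro m _
        simp only [Pi.smul_apply, Pi.add_apply, svR_apply, smul_eq_mul]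
        split_ifs <;> ring
      rw [Finset.sum_congr rfl this, Finset.sum_add_distrib, ← Finset.sum_mul, hwsum]
      rw [Finset.sum_ite_eq S t (fun m => wt m * α)]
      by_cases ht : t ∈ S
      · simp only [ht, if_true, hwt]
        field_simp
        ring
      · simp only [ht, if_false]
        rw [h1 t ht]; ring
    rwa [heq] at hcm

lemma coll_false {n : ℕ} {P : Set (Fin n → ℝ)} {p d : Fin n → ℝ} (hd : d ≠ 0)
    {t1 t2 t3 : ℝ} (h12 : t1 < t2) (h23 : t2 < t3)
    (hq1 : p + t1 • d ∈ P) (hq3 : p + t3 • d ∈ P)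
    (hq2 : p + t2 • d ∈ P.extremePoints ℝ) : False := by
  have h13 : t1 < t3 := lt_trans h12 h23
  have hpos : (0:ℝ) < t3 - t1 := by linarith
  set θ := (t3 - t2) / (t3 - t1) with hθ
  have hθpos : 0 < θ := div_pos (by linarith) hpos
  have hθ1 : θ + (t2 - t1) / (t3 - t1) = 1 := by
    rw [hθ, ← add_div, show t3 - t2 + (t2 - t1) = t3 - t1 by ring,
      div_self hpos.ne']
  have hθ2pos : 0 < (t2 - t1) / (t3 - t1) := div_pos (by linarith) hpos
  have hseg : p + t2 • d ∈ openSegment ℝ (p + t1 • d) (p + t3 • d) := by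
    refine ⟨θ, (t2 - t1) / (t3 - t1), hθpos, hθ2pos, hθ1, ?_⟩
    have hco : θ * t1 + (t2 - t1) / (t3 - t1) * t3 = t2 := by
      rw [hθ]; field_simp; ring
    funext u
    simp only [Pi.add_apply, Pi.smul_apply, smul_eq_mul]
    linear_combination (p u) * hθ1 + (d u) * hco
  obtain ⟨-, hext⟩ := hq2
  have := hext hq1 hq3 hseg
  have hdiff : (t1 - t2) • d = 0 := by
    have h := sub_eq_zero_of_eq this
    funext u
    have := congrFun h u
    simp only [Pi.sub_apply, Pi.add_apply, Pi.smul_apply, smul_eq_mul, Pi.zero_apply] at this ⊢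
    linarith [this]
  rcases smul_eq_zero.mp hdiff with h | h
  · linarith [sub_eq_zero.mp (by linarith : t1 - t2 = (0:ℝ))]
  · exact hd h

lemma isExtreme_pair {n : ℕ} {P : Set (Fin n → ℝ)} {x y : Fin n → ℝ}
    (hx : x ∈ P.extremePoints ℝ) (hy : y ∈ P.extremePoints ℝ) :
    IsExtreme ℝ P {x, y} := by
  constructor
  · intro z hz
    rcases hz with rfl | rfl
    · exact hx.1
    · exact hy.1
  · intro x1 hx1 x2 hx2 z hz hseg
    rcases hz with rfl | rfl
    · have h1 := hx.2 hx1 hx2 hseg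
      rw [h1]; exact Set.mem_insert _ _
    · have h1 := hy.2 hx1 hx2 hseg
      rw [h1]; exact Set.mem_insert_iff.mpr (Or.inr rfl)

lemma rootR_eq_cast {n : ℕ} (i j : Fin n) : rootR n i j = coeZ (rootZ n i j) := by
  funext t
  simp only [rootR, rootZ, coeZ_apply]
  split_ifs <;> norm_num

lemma structure_lemma {n : ℕ} (A : Finset (Fin n → ℤ)) (hA : RootSaturated A)
    (hne : (convexHull ℝ (coeZ '' (A : Set (Fin n → ℤ)))).Nonempty) :
    ∃ lo hi : Fin n → ℤ, ∀ x : Fin n → ℝ,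
      x ∈ convexHull ℝ (coeZ '' (A : Set (Fin n → ℤ))) ↔
        ((∀ i, (lo i : ℝ) ≤ x i ∧ x i ≤ (hi i : ℝ)) ∧ ∑ i, x i = 0) := by
  classical
  set P := convexHull ℝ (coeZ '' (A : Set (Fin n → ℤ))) with hP
  have hPconv : Convex ℝ P := convex_convexHull ℝ _
  have hAfin : (coeZ '' (A : Set (Fin n → ℤ))).Finite := A.finite_toSet.image coeZ
  have hPcomp : IsCompact P := hAfin.isCompact_convexHull (𝕜 := ℝ)
  have hext_sub : P.extremePoints ℝ ⊆ coeZ '' (A : Set (Fin n → ℤ)) :=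
    extremePoints_convexHull_subset
  have hextfin : (P.extremePoints ℝ).Finite := hAfin.subset hext_sub
  have hKM : convexHull ℝ (P.extremePoints ℝ) = P := by
    have h1 := closure_convexHull_extremePoints hPcomp hPconv
    rwa [IsClosed.closure_eq ((hextfin.isCompact_convexHull (𝕜 := ℝ)).isClosed)] at h1
  set Vz := A.filter (fun v => coeZ v ∈ P.extremePoints ℝ) with hVzdef
  have hVz : coeZ '' (Vz : Set (Fin n → ℤ)) = P.extremePoints ℝ := by
    apply Set.Subset.antisymm
    · rintro - ⟨v, hv, rfl⟩
      exact (Finset.mem_filter.mp hv).2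
    · intro e he
      obtain ⟨v, hvA, rfl⟩ := hext_sub he
      exact ⟨v, Finset.mem_filter.mpr ⟨hvA, he⟩, rfl⟩
  have hVzsub : ∀ v ∈ Vz, v ∈ A := fun v hv => (Finset.mem_filter.mp hv).1
  have hVzext : ∀ v ∈ Vz, coeZ v ∈ P.extremePoints ℝ :=
    fun v hv => (Finset.mem_filter.mp hv).2
  have hVzne : Vz.Nonempty := by
    rcases hne with ⟨x0, hx0⟩
    by_contra hVe
    rw [Finset.not_nonempty_iff_eq_empty] at hVe
    have : P.extremePoints ℝ = ∅ := by rw [← hVz, hVe]; simp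
    rw [this] at hKM
    simp only [convexHull_empty] at hKM
    rw [← hKM] at hx0
    exact hx0
  have hPVz : P = convexHull ℝ (coeZ '' (Vz : Set (Fin n → ℤ))) := by
    rw [hVz, hKM]
  -- pairwise root condition
  have hpair : ∀ u ∈ Vz, ∀ v ∈ Vz, u ≠ v → RootM (u - v) := by
    intro u hu v hv huv
    have hne' : coeZ u ≠ coeZ v := fun h => huv (coeZ_injective h)
    have hedge : IsEdge P {coeZ u, coeZ v} := by
      constructor
      · exact isExtreme_pair (hVzext u hu) (hVzext v hv)
      · rw [direction_affineSpan, vectorSpan_pair]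
        have : coeZ u -ᵥ coeZ v = coeZ u - coeZ v := rfl
        rw [this]
        exact finrank_span_singleton (sub_ne_zero.mpr hne')
    obtain ⟨i, j, hij, hpar⟩ := hA.2.1 _ hedge
    obtain ⟨c, hc⟩ := hpar (coeZ u) (Set.mem_insert _ _) (coeZ v)
      (Set.mem_insert_iff.mpr (Or.inr rfl))
    have hci : c = ((u i - v i : ℤ) : ℝ) := by
      have h := congrFun hc i
      simp only [Pi.sub_apply, Pi.smul_apply, smul_eq_mul, coeZ_apply, rootR,
        if_neg hij] at h
      norm_num at h
      push_cast
      linarith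
    have ha : u i - v i ≠ 0 := by
      intro h0
      rw [hci, h0] at hc
      simp only [Int.cast_zero, zero_smul] at hc
      exact hne' (sub_eq_zero.mp hc)
    refine ⟨i, j, u i - v i, hij, ha, ?_⟩
    funext t
    have h := congrFun hc t
    rw [hci, rootR_eq_cast] at h
    simp only [Pi.sub_apply, Pi.smul_apply, smul_eq_mul, coeZ_apply] at h
    have : (↑(u t - v t) : ℝ) = ((u i - v i) * rootZ n i j t : ℤ) := by push_cast; push_cast at h; linarith
    have h2 : u t - v t = (u i - v i) * rootZ n i j t := by exact_mod_cast this
    simp only [Pi.sub_apply, Pi.smul_apply, smul_eq_mul]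
    exact h2
  -- no three collinear
  have hnocoll : ∀ u ∈ Vz, ∀ v ∈ Vz, ∀ x ∈ Vz, u ≠ v → x ≠ u → x ≠ v →
      ∀ i j : Fin n, i ≠ j → ∀ a b : ℤ, u - v = a • rootZ n i j →
        x - v = b • rootZ n i j → False := by
    intro u hu v hv x hx huv hxu hxv i j hij a b h1 h2
    have hd : rootR n i j ≠ 0 := by
      intro h
      have := congrFun h i
      simp only [rootR, Pi.zero_apply, if_pos rfl, if_neg hij] at this
      norm_num at this
    have tocast : ∀ (y z : Fin n → ℤ) (cc : ℤ), y - z = cc • rootZ n i j →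
        coeZ y = coeZ z + (cc : ℝ) • rootR n i j := by
      intro y z cc hyz
      funext t
      have hz := congrFun hyz t
      simp only [Pi.sub_apply, Pi.smul_apply, smul_eq_mul] at hz
      rw [rootR_eq_cast]
      simp only [Pi.add_apply, Pi.smul_apply, smul_eq_mul, coeZ_apply]
      have : y t = z t + cc * rootZ n i j t := by linarith
      exact_mod_cast this
    have hu' : coeZ u = coeZ v + (a : ℝ) • rootR n i j := tocast u v a h1
    have hx' : coeZ x = coeZ v + (b : ℝ) • rootR n i j := tocast x v b h2
    have hv' : coeZ v = coeZ v + (0 : ℝ) • rootR n i j := by simp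
    have hane : a ≠ 0 := by
      rintro rfl
      simp only [zero_smul] at h1
      apply huv
      funext t
      have := congrFun h1 t
      simp only [Pi.sub_apply, Pi.zero_apply] at this
      linarith
    have hbne : b ≠ 0 := by
      rintro rfl
      simp only [zero_smul] at h2
      apply hxv
      funext t
      have := congrFun h2 t
      simp only [Pi.sub_apply, Pi.zero_apply] at this
      linarith
    have hab : a ≠ b := by
      rintro rfl
      apply hxu
      funext t
      have e1 := congrFun h1 t
      have e2 := congrFun h2 t
      simp only [Pi.sub_apply, Pi.smul_apply, smul_eq_mul] at e1 e2
      linarith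
    have haR : (a : ℝ) ≠ 0 := Int.cast_ne_zero.mpr hane
    have hbR : (b : ℝ) ≠ 0 := Int.cast_ne_zero.mpr hbne
    have habR : (a : ℝ) ≠ (b : ℝ) := fun h => hab (by exact_mod_cast h)
    have hmemP : ∀ y ∈ Vz, coeZ y ∈ P := fun y hy => extremePoints_subset (hVzext y hy)
    -- six orderings of 0, a, b
    have hue := hVzext u hu; have hve := hVzext v hv; have hxe := hVzext x hx
    have huP := hmemP u hu; have hvP := hmemP v hv; have hxP := hmemP x hx
    rw [hu'] at hue huP
    rw [hx'] at hxe hxP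
    rw [hv'] at hve hvP
    rcases lt_trichotomy (a : ℝ) (b : ℝ) with h | h | h
    · rcases lt_trichotomy (a : ℝ) 0 with ha0 | ha0 | ha0
      · rcases lt_trichotomy (b : ℝ) 0 with hb0 | hb0 | hb0
        · exact coll_false hd h hb0 huP hvP hxe
        · exact absurd hb0 hbR
        · exact coll_false hd ha0 hb0 huP hxP hve
      · exact absurd ha0 haR
      · exact coll_false hd ha0 h hvP hxP hue
    · exact absurd h habR
    · rcases lt_trichotomy (b : ℝ) 0 with hb0 | hb0 | hb0
      · rcases lt_trichotomy (a : ℝ) 0 with ha0 | ha0 | ha0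
        · exact coll_false hd h ha0 hxP hvP hue
        · exact absurd ha0 haR
        · exact coll_false hd hb0 ha0 hxP huP hve
      · exact absurd hb0 hbR
      · exact coll_false hd hb0 h hvP huP hxe
  -- case on the number of extreme points
  rcases eq_or_lt_of_le (Nat.succ_le_of_lt (Finset.card_pos.mpr hVzne)) with h1 | h2
  · -- single extreme point : P = {coeZ v0}
    obtain ⟨v0, hv0⟩ := Finset.card_eq_one.mp h1.symm
    have hPsingle : P = {coeZ v0} := by
      rw [hPVz, hv0]
      simp only [Finset.coe_singleton, Set.image_singleton, convexHull_singleton]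
    have hv0A : v0 ∈ A := hVzsub v0 (by rw [hv0]; exact Finset.mem_singleton_self v0)
    have hv0sum : ∑ i, v0 i = 0 := hA.1 v0 hv0A
    refine ⟨v0, v0, fun x => ?_⟩
    rw [hPsingle]
    constructor
    · rintro rfl
      refine ⟨fun i => ⟨le_refl _, le_refl _⟩, ?_⟩
      rw [show ∑ i, coeZ v0 i = ((∑ i, v0 i : ℤ) : ℝ) by push_cast; rfl, hv0sum]
      norm_num
    · rintro ⟨hb, -⟩
      have : x = coeZ v0 := by
        funext t
        exact le_antisymm (hb t).2 (hb t).1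
      rw [this]; rfl
  · -- at least two extreme points : simplex case
    obtain ⟨w, a, S, ha, hVS⟩ := class_lemma Vz h2 hpair hnocoll
    have hSne : S.Nonempty := by
      rcases Finset.eq_empty_or_nonempty S with rfl | h
      · rw [Finset.image_empty] at hVS
        rw [hVS] at hVzne
        exact absurd hVzne (by simp)
      · exact h
    -- image transfer to ℝ
    have himg : coeZ '' (Vz : Set (Fin n → ℤ)) =
        (fun m => coeZ w + (a : ℝ) • svR m) '' (S : Set (Fin n)) := by
      rw [hVS, Finset.coe_image, ← Set.image_comp]
      apply Set.image_congr
      intro m _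
      funext t
      simp only [Function.comp_apply, coeZ_apply, Pi.add_apply, Pi.smul_apply,
        svZ_apply, svR_apply, smul_eq_mul]
      push_cast
      split_ifs <;> norm_num
    -- sum fact : ∑ w + a = 0
    obtain ⟨m0, hm0⟩ := hSne
    have hm0A : w + a • svZ m0 ∈ A := by
      apply hVzsub
      rw [hVS]
      exact Finset.mem_image_of_mem _ hm0
    have hwsum : (∑ i, w i) + a = 0 := by
      have := hA.1 _ hm0A
      simp only [Pi.add_apply] at this
      rw [Finset.sum_add_distrib] at this
      have hsv : ∑ i, (a • svZ m0) i = a := by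
        simp only [Pi.smul_apply, svZ_apply, smul_eq_mul, mul_ite, mul_one, mul_zero]
        rw [Finset.sum_ite_eq' Finset.univ m0 (fun _ => a)]
        simp
      rw [hsv] at this
      omega
    -- the box description
    have hαR : ((a : ℤ) : ℝ) ≠ 0 := Int.cast_ne_zero.mpr ha
    have cast_min_wa : ∀ wi : ℤ, ((min wi (wi + a) : ℤ) : ℝ) = (wi : ℝ) + min 0 (a : ℝ) := by
      intro wi
      rcases le_total (0 : ℤ) a with h | h
      · rw [min_eq_left (by omega), min_eq_left (by exact_mod_cast h : (0:ℝ) ≤ (a:ℝ))]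
        simp
      · rw [min_eq_right (by omega), min_eq_right (by exact_mod_cast h : (a:ℝ) ≤ (0:ℝ))]
        push_cast; ring
    have cast_max_wa : ∀ wi : ℤ, ((max wi (wi + a) : ℤ) : ℝ) = (wi : ℝ) + max 0 (a : ℝ) := by
      intro wi
      rcases le_total (0 : ℤ) a with h | h
      · rw [max_eq_right (by omega), max_eq_right (by exact_mod_cast h : (0:ℝ) ≤ (a:ℝ))]
        push_cast; ring
      · rw [max_eq_left (by omega), max_eq_left (by exact_mod_cast h : (a:ℝ) ≤ (0:ℝ))]
        simp
    refine ⟨fun i => if i ∈ S then min (w i) (w i + a) else w i,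
            fun i => if i ∈ S then max (w i) (w i + a) else w i, fun x => ?_⟩
    rw [hP] at hPVz ⊢
    rw [hPVz, himg, simplex_hull S (coeZ w) ((a : ℤ) : ℝ) hαR x]
    have hsw : ∑ i, coeZ w i = ((∑ i, w i : ℤ) : ℝ) := by push_cast; rfl
    have hwsumR : ((∑ i, w i : ℤ) : ℝ) + ((a : ℤ) : ℝ) = 0 := by
      exact_mod_cast congrArg (fun z : ℤ => (z : ℝ)) hwsum
    constructor
    · rintro ⟨hc1, hc2, hc3⟩
      constructor
      · intro i
        by_cases hiS : i ∈ S
        · obtain ⟨hlo, hhi⟩ := hc2 i hiS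
          simp only [hiS, if_true]
          rw [cast_min_wa, cast_max_wa]
          simp only [coeZ_apply] at hlo hhi
          constructor <;> linarith
        · rw [hc1 i hiS]
          simp only [hiS, if_false, coeZ_apply]
          exact ⟨le_refl _, le_refl _⟩
      · rw [Finset.sum_sub_distrib, hsw] at hc3
        linarith [hwsumR]
    · rintro ⟨hb, hsum⟩
      refine ⟨?_, ?_, ?_⟩
      · intro i hiS
        have h := hb i
        simp only [hiS, if_false, coeZ_apply] at h ⊢
        exact le_antisymm h.2 h.1
      · intro i hiS
        have h := hb i
        simp only [hiS, if_true] at h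
        rw [cast_min_wa, cast_max_wa] at h
        simp only [coeZ_apply]
        constructor <;> linarith [h.1, h.2]
      · rw [Finset.sum_sub_distrib, hsw, hsum]
        linarith [hwsumR]

/-- if `A` and `B` are root-saturated and their convex hulls
intersect, then `A ∩ B` is nonempty. -/
theorem rootSaturated_inter_nonempty (n : ℕ) (A B : Finset (Fin n → ℤ))
    (hA : RootSaturated A) (hB : RootSaturated B)
    (hmeet : (convexHull ℝ (coeZ '' (A : Set (Fin n → ℤ))) ∩
        convexHull ℝ (coeZ '' (B : Set (Fin n → ℤ)))).Nonempty) :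
    ∃ v, v ∈ A ∧ v ∈ B := by
  obtain ⟨x, hxA, hxB⟩ := hmeet
  obtain ⟨loA, hiA, hdA⟩ := structure_lemma A hA ⟨x, hxA⟩
  obtain ⟨loB, hiB, hdB⟩ := structure_lemma B hB ⟨x, hxB⟩
  obtain ⟨hbA, hsA⟩ := (hdA x).mp hxA
  obtain ⟨hbB, hsB⟩ := (hdB x).mp hxB
  set L : Fin n → ℤ := fun i => max (loA i) (loB i) with hLdef
  set U : Fin n → ℤ := fun i => min (hiA i) (hiB i) with hUdef
  have hLx : ∀ i, (L i : ℝ) ≤ x i := by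
    intro i
    rcases le_total (loA i) (loB i) with h | h
    · rw [hLdef]; simp only [max_eq_right h]; exact (hbB i).1
    · rw [hLdef]; simp only [max_eq_left h]; exact (hbA i).1
  have hxU : ∀ i, x i ≤ (U i : ℝ) := by
    intro i
    rcases le_total (hiA i) (hiB i) with h | h
    · rw [hUdef]; simp only [min_eq_left h]; exact (hbA i).2
    · rw [hUdef]; simp only [min_eq_right h]; exact (hbB i).2
  have hLU : ∀ i, L i ≤ U i := by
    intro i
    have : (L i : ℝ) ≤ (U i : ℝ) := le_trans (hLx i) (hxU i)
    exact_mod_cast this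
  have hsumL : ∑ i, L i ≤ 0 := by
    have h1 : ∑ i, (L i : ℝ) ≤ ∑ i, x i := Finset.sum_le_sum (fun i _ => hLx i)
    rw [hsA] at h1
    have h2 : ((∑ i, L i : ℤ) : ℝ) = ∑ i, (L i : ℝ) := by push_cast; rfl
    rw [← h2] at h1
    exact_mod_cast h1
  have hsumU : 0 ≤ ∑ i, U i := by
    have h1 : ∑ i, x i ≤ ∑ i, (U i : ℝ) := Finset.sum_le_sum (fun i _ => hxU i)
    rw [hsA] at h1
    have h2 : ((∑ i, U i : ℤ) : ℝ) = ∑ i, (U i : ℝ) := by push_cast; rfl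
    rw [← h2] at h1
    exact_mod_cast h1
  obtain ⟨z, hz1, hz2⟩ := exists_int_in_box L U hLU hsumL hsumU
  have hzsumR : ∑ i, coeZ z i = 0 := by
    have : ((∑ i, z i : ℤ) : ℝ) = ∑ i, coeZ z i := by push_cast; rfl
    rw [hz2] at this
    simpa using this.symm
  have hzA : coeZ z ∈ convexHull ℝ (coeZ '' (A : Set (Fin n → ℤ))) := by
    apply (hdA (coeZ z)).mpr
    refine ⟨fun i => ⟨?_, ?_⟩, hzsumR⟩
    · have : loA i ≤ z i := le_trans (le_max_left _ _) (hz1 i).1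
      simp only [coeZ_apply]
      exact_mod_cast this
    · have : z i ≤ hiA i := le_trans (hz1 i).2 (min_le_left _ _)
      simp only [coeZ_apply]
      exact_mod_cast this
  have hzB : coeZ z ∈ convexHull ℝ (coeZ '' (B : Set (Fin n → ℤ))) := by
    apply (hdB (coeZ z)).mpr
    refine ⟨fun i => ⟨?_, ?_⟩, hzsumR⟩
    · have : loB i ≤ z i := le_trans (le_max_right _ _) (hz1 i).1
      simp only [coeZ_apply]
      exact_mod_cast this
    · have : z i ≤ hiB i := le_trans (hz1 i).2 (min_le_right _ _)
      simp only [coeZ_apply]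
      exact_mod_cast this
  exact ⟨z, hA.2.2 z hz2 hzA, hB.2.2 z hz2 hzB⟩
end

section
/- Let A ⊂ Z^n be a finite set all of whose elements have coordinate sum d > 0, such that A - a is root-saturated for a ∈ A and such that all N-fold Minkowski sums N·A satisfy (N·A) - Na root-saturated. Let N_d = {v ∈ Z^n : Σ v_i ≡ 0 mod d}. Then the rational cone generated by A intersected with N_d equals the semigroup N(A) generated by A: Q≥0(A) ∩ N_d = N(A). -/
open Finset Pointwise

/-- The `N`-fold Minkowski sum `A + A + ⋯ + A` of a finite set of vectors. -/
def minkPow {n : ℕ} (A : Finset (Fin n → ℤ)) : ℕ → Finset (Fin n → ℤ)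
  | 0 => {0}
  | N + 1 => A + minkPow A N

/-- `coeZ` as an additive monoid hom. -/
def coeZHom (n : ℕ) : (Fin n → ℤ) →+ (Fin n → ℝ) where
  toFun := coeZ
  map_zero' := by funext i; simp [coeZ]
  map_add' x y := by funext i; simp [coeZ]

lemma coeZ_sub {n : ℕ} (x y : Fin n → ℤ) : coeZ (x - y) = coeZ x - coeZ y := by
  funext i; simp [coeZ]

lemma minkPow_subset_closure {n : ℕ} (A : Finset (Fin n → ℤ)) (N : ℕ) :
    ∀ x ∈ minkPow A N, x ∈ AddSubmonoid.closure (A : Set (Fin n → ℤ)) := by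
  induction N with
  | zero =>
    intro x hx
    simp only [minkPow, Finset.mem_singleton] at hx
    subst hx; exact zero_mem _
  | succ N ih =>
    intro x hx
    rw [minkPow, Finset.mem_add] at hx
    obtain ⟨a, ha, m, hm, rfl⟩ := hx
    exact add_mem (AddSubmonoid.subset_closure ha) (ih m hm)

lemma smul_mem_hull_minkPow {n : ℕ} (A : Finset (Fin n → ℤ)) (N : ℕ)
    {y : Fin n → ℝ} (hy : y ∈ convexHull ℝ (coeZ '' (A : Set (Fin n → ℤ)))) :
    (N : ℝ) • y ∈ convexHull ℝ (coeZ '' ((minkPow A N : Finset (Fin n → ℤ)) : Set (Fin n → ℤ))) := by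
  induction N with
  | zero =>
    simp only [minkPow, Nat.cast_zero, zero_smul, Finset.coe_singleton, Set.image_singleton]
    rw [show coeZ (0 : Fin n → ℤ) = 0 from map_zero (coeZHom n), convexHull_singleton]
    exact Set.mem_singleton _
  | succ N ih =>
    have himg : coeZ '' ((minkPow A (N+1) : Finset (Fin n → ℤ)) : Set (Fin n → ℤ)) =
        coeZ '' (A : Set (Fin n → ℤ)) +
          coeZ '' ((minkPow A N : Finset (Fin n → ℤ)) : Set (Fin n → ℤ)) := by
      rw [show minkPow A (N+1) = A + minkPow A N from rfl, Finset.coe_add]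
      exact Set.image_add (coeZHom n)
    rw [himg, convexHull_add]
    have : ((N + 1 : ℕ) : ℝ) • y = y + (N : ℝ) • y := by
      push_cast; rw [add_smul, one_smul, add_comm]
    rw [this]
    exact Set.add_mem_add hy ih

/-- for a finite set `A ⊂ ℤ^n` with all coordinate sums equal to
`d > 0` whose translated `N`-fold Minkowski sums are all root-saturated, the
rational cone over `A` intersected with the lattice `N_d = {v : ∑vᵢ ≡ 0 mod d}`
equals the semigroup generated by `A`. -/
theorem cone_inter_lattice_eq_semigroup (n : ℕ) (d : ℕ) (hd : 0 < d)
    (A : Finset (Fin n → ℤ)) (hsum : ∀ a ∈ A, ∑ i, a i = (d : ℤ))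
    (hsat : ∀ a ∈ A, ∀ N : ℕ, 0 < N →
      RootSaturated ((minkPow A N).image (fun x => x - N • a)))
    (v : Fin n → ℤ) :
    ((∃ c : (Fin n → ℤ) → ℚ, (∀ x, 0 ≤ c x) ∧
        ∀ i, (v i : ℚ) = ∑ x ∈ A, c x * (x i : ℚ)) ∧
      (d : ℤ) ∣ ∑ i, v i) ↔
    v ∈ AddSubmonoid.closure (A : Set (Fin n → ℤ)) := by
  constructor
  · rintro ⟨⟨c, hc0, hcv⟩, k, hk⟩
    have hdq : (0 : ℚ) < (d : ℚ) := by exact_mod_cast hd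
    have hsq : ((∑ i, v i : ℤ) : ℚ) = (d : ℚ) * ∑ x ∈ A, c x := by
      push_cast
      calc ∑ i, (v i : ℚ) = ∑ i, ∑ x ∈ A, c x * (x i : ℚ) :=
            Finset.sum_congr rfl fun i _ => hcv i
        _ = ∑ x ∈ A, ∑ i, c x * (x i : ℚ) := Finset.sum_comm
        _ = ∑ x ∈ A, c x * ∑ i, (x i : ℚ) := by
            exact Finset.sum_congr rfl fun x _ => (Finset.mul_sum _ _ _).symm
        _ = ∑ x ∈ A, c x * (d : ℚ) := by
            refine Finset.sum_congr rfl fun x hx => ?_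
            congr 1
            exact_mod_cast hsum x hx
        _ = (d : ℚ) * ∑ x ∈ A, c x := by rw [← Finset.sum_mul, mul_comm]
    have hck : ∑ x ∈ A, c x = (k : ℚ) := by
      have h2 : (d : ℚ) * ∑ x ∈ A, c x = (d : ℚ) * (k : ℚ) := by
        rw [← hsq, hk]; push_cast; ring
      exact mul_left_cancel₀ (ne_of_gt hdq) h2
    have hk0 : 0 ≤ k := by
      have : (0 : ℚ) ≤ (k : ℚ) := hck ▸ Finset.sum_nonneg fun x _ => hc0 x
      exact_mod_cast this
    rcases eq_or_lt_of_le hk0 with h0 | hkpos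
    · have hsum0 : ∑ x ∈ A, c x = 0 := by rw [hck, ← h0]; simp
      have hcz : ∀ x ∈ A, c x = 0 :=
        (Finset.sum_eq_zero_iff_of_nonneg fun x _ => hc0 x).mp hsum0
      have hv0 : v = 0 := by
        funext i
        have h := hcv i
        rw [Finset.sum_eq_zero (fun x hx => by rw [hcz x hx, zero_mul])] at h
        exact_mod_cast h
      rw [hv0]; exact zero_mem _
    · set N := k.toNat with hNdef
      have hNk : (N : ℤ) = k := Int.toNat_of_nonneg hk0
      have hN : 0 < N := by omega
      set w : (Fin n → ℤ) → ℝ := fun x => ((c x : ℚ) : ℝ) with hw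
      have hw0 : ∀ x ∈ A, 0 ≤ w x := fun x _ => by
        simp only [hw]; exact_mod_cast hc0 x
      have hws : ∑ x ∈ A, w x = (N : ℝ) := by
        have h2 : ∑ x ∈ A, w x = ((k : ℚ) : ℝ) := by
          rw [← hck]; push_cast; rfl
        rw [h2, ← hNk]; push_cast; ring
      have hwspos : 0 < ∑ x ∈ A, w x := by
        rw [hws]; exact_mod_cast hN
      have hS : ∑ x ∈ A, w x • coeZ x = coeZ v := by
        funext i
        simp only [Finset.sum_apply, Pi.smul_apply, smul_eq_mul, coeZ, hw]
        have := hcv i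
        exact_mod_cast this.symm
      have hy : A.centerMass w coeZ ∈ convexHull ℝ (coeZ '' (A : Set (Fin n → ℤ))) :=
        A.centerMass_mem_convexHull hw0 hwspos fun x hx => Set.mem_image_of_mem _ hx
      have hN0 : (N : ℝ) ≠ 0 := by exact_mod_cast hN.ne'
      have hNy : (N : ℝ) • A.centerMass w coeZ = coeZ v := by
        rw [Finset.centerMass, hws, hS, smul_inv_smul₀ hN0]
      have hhull : coeZ v ∈
          convexHull ℝ (coeZ '' ((minkPow A N : Finset (Fin n → ℤ)) : Set (Fin n → ℤ))) :=
        hNy ▸ smul_mem_hull_minkPow A N hy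
      have hApos : A.Nonempty := by
        by_contra h
        rw [Finset.not_nonempty_iff_eq_empty] at h
        rw [h] at hwspos; simp at hwspos
      obtain ⟨a, ha⟩ := hApos
      set b := coeZ (N • a) with hb
      have hset : coeZ '' ((((minkPow A N).image (fun x => x - N • a)) :
            Finset (Fin n → ℤ)) : Set (Fin n → ℤ)) =
          coeZ '' ((minkPow A N : Finset (Fin n → ℤ)) : Set (Fin n → ℤ)) + {-b} := by
        rw [Finset.coe_image, Set.image_image, Set.add_singleton, Set.image_image]
        exact Set.image_congr fun x _ => by rw [coeZ_sub, sub_eq_add_neg]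
      have hmem2 : coeZ (v - N • a) ∈ convexHull ℝ
          (coeZ '' ((((minkPow A N).image (fun x => x - N • a)) :
            Finset (Fin n → ℤ)) : Set (Fin n → ℤ))) := by
        rw [hset, convexHull_add, convexHull_singleton, coeZ_sub, sub_eq_add_neg]
        exact Set.add_mem_add hhull rfl
      have hz : ∑ i, (v - N • a) i = 0 := by
        have h1 : ∑ i, (v - N • a) i = ∑ i, v i - (N : ℤ) * ∑ i, a i := by
          simp only [Pi.sub_apply]
          rw [Finset.sum_sub_distrib]
          congr 1
          rw [Finset.mul_sum]
          exact Finset.sum_congr rfl fun i _ => by simp [nsmul_eq_mul]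
        rw [h1, hk, hsum a ha, hNk]; ring
      obtain ⟨-, -, hsat3⟩ := hsat a ha N hN
      have hvm := hsat3 (v - N • a) hz hmem2
      rw [Finset.mem_image] at hvm
      obtain ⟨x, hx, hxe⟩ := hvm
      have hxv : x = v := sub_left_inj.mp hxe
      rw [← hxv]
      exact minkPow_subset_closure A N x hx
  · intro hv
    refine AddSubmonoid.closure_induction
      (motive := fun x _ => (∃ c : (Fin n → ℤ) → ℚ, (∀ t, 0 ≤ c t) ∧
          ∀ i, (x i : ℚ) = ∑ t ∈ A, c t * (t i : ℚ)) ∧ (d : ℤ) ∣ ∑ i, x i)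
      ?_ ?_ ?_ hv
    · intro a ha
      refine ⟨⟨fun t => if t = a then 1 else 0,
        fun t => by by_cases h : t = a <;> simp [h], fun i => ?_⟩, ?_⟩
      · simp [ite_mul, Finset.sum_ite_eq', Finset.mem_coe.mp ha]
      · rw [hsum a ha]
    · exact ⟨⟨fun _ => 0, fun _ => le_refl 0, fun i => by simp⟩, by simp⟩
    · rintro x y hx hy ⟨⟨c1, h10, h1v⟩, hd1⟩ ⟨⟨c2, h20, h2v⟩, hd2⟩
      refine ⟨⟨fun t => c1 t + c2 t,
        fun t => add_nonneg (h10 t) (h20 t), fun i => ?_⟩, ?_⟩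
      · have : ((x + y) i : ℚ) = (x i : ℚ) + (y i : ℚ) := by simp
        rw [this, h1v i, h2v i, ← Finset.sum_add_distrib]
        exact Finset.sum_congr rfl fun t _ => by ring
      · have : ∑ i, (x + y) i = ∑ i, x i + ∑ i, y i := by
          simp [Finset.sum_add_distrib]
        rw [this]
        exact dvd_add hd1 hd2
end
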